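/- arXiv:2508.16162 — 7 statements merged into one kernel-verified Lean document; each statement's English description precedes it below -/
import Mathlib

section
/- Let G be a compact topological group equipped with its Haar probability measure dg, and let (ρ, V) and (ρ', V') be two continuous finite-dimensional irreducible unitary representations of G that are not equivalent (i.e., there is no linear isomorphism A : V → V' with A ∘ ρ(g) = ρ'(g) ∘ A for all g ∈ G). Then for all vectors u, v ∈ V and u', v' ∈ V', ∫_G ⟨ρ(g)u, v⟩ · conj(⟨ρ'(g)u', v'⟩) dg = 0. -/
/-!
Average the rank-one map `x ↦ ⟪v', x⟫ • v` from `V'` to `V` over `G`: by invariance of the Haar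
measure the result `T` intertwines `ρ'` with `ρ`, and the integral in question is exactly
`⟪u, T u'⟫`. By Schur's lemma an intertwiner between inequivalent irreducible representations
vanishes, so the integral is zero.
-/

open MeasureTheory

section Schur

variable {ι R M N : Type*} [Ring R] [AddCommGroup M] [Module R M] [AddCommGroup N] [Module R N]
  {σ : ι → Module.End R M} {τ : ι → Module.End R N}

theorem eq_zero_or_bijective_of_intertwines
    (hσ : ∀ W : Submodule R M, (∀ i, ∀ x ∈ W, σ i x ∈ W) → W = ⊥ ∨ W = ⊤)
    (hτ : ∀ W : Submodule R N, (∀ i, ∀ y ∈ W, τ i y ∈ W) → W = ⊥ ∨ W = ⊤)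
    {T : M →ₗ[R] N} (hT : ∀ i x, T (σ i x) = τ i (T x)) :
    T = 0 ∨ Function.Bijective T := by
  have hker : LinearMap.ker T = ⊥ ∨ LinearMap.ker T = ⊤ :=
    hσ _ fun i x hx => by simp_all [LinearMap.mem_ker]
  have hrange : LinearMap.range T = ⊥ ∨ LinearMap.range T = ⊤ :=
    hτ _ fun i _ ⟨x, hx⟩ => ⟨σ i x, by rw [hT, hx]⟩
  rcases hker with hker | hker
  · rcases hrange with hrange | hrange
    · exact .inl (LinearMap.range_eq_bot.mp hrange)
    · exact .inr ⟨LinearMap.ker_eq_bot.mp hker, LinearMap.range_eq_top.mp hrange⟩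
  · exact .inl (LinearMap.ker_eq_top.mp hker)

theorem eq_zero_of_intertwines_of_not_equiv
    (hσ : ∀ W : Submodule R M, (∀ i, ∀ x ∈ W, σ i x ∈ W) → W = ⊥ ∨ W = ⊤)
    (hτ : ∀ W : Submodule R N, (∀ i, ∀ y ∈ W, τ i y ∈ W) → W = ⊥ ∨ W = ⊤)
    (hne : ¬∃ A : N ≃ₗ[R] M, ∀ i y, A (τ i y) = σ i (A y))
    {T : M →ₗ[R] N} (hT : ∀ i x, T (σ i x) = τ i (T x)) : T = 0 := by
  refine (eq_zero_or_bijective_of_intertwines hσ hτ hT).resolve_right fun hbij => hne ?_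
  let e := LinearEquiv.ofBijective T hbij
  refine ⟨e.symm, fun i y => e.injective ?_⟩
  simp [e, hT]

end Schur

theorem isMulRightInvariant_of_compactSpace {G : Type*} [Group G] [TopologicalSpace G]
    [IsTopologicalGroup G] [CompactSpace G] [MeasurableSpace G] [BorelSpace G]
    (μ : Measure G) [μ.IsHaarMeasure] : μ.IsMulRightInvariant := by
  refine ⟨fun h => ?_⟩
  have hc := Measure.isMulInvariant_eq_smul_of_compactSpace (μ.map (· * h)) μ
  set c := Measure.haarScalarFactor (μ.map (· * h)) μ
  suffices c = 1 by rwa [this, one_smul] at hc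
  have hmass : c * μ Set.univ = 1 * μ Set.univ := by
    rw [one_mul, ← smul_eq_mul, ← ENNReal.smul_def, ← Measure.smul_apply, ← hc,
      Measure.map_apply (measurable_mul_const h) .univ, Set.preimage_univ]
  rwa [ENNReal.mul_left_inj (NeZero.ne _) (measure_ne_top _ _), ENNReal.coe_eq_one] at hmass

section Averaging

variable {G : Type*} [Group G] [MeasurableSpace G]
  {E F : Type*} [NormedAddCommGroup E] [NormedSpace ℂ E] [NormedAddCommGroup F] [NormedSpace ℂ F]
  (μ : Measure G) (ρ : G →* (E ≃ₗᵢ[ℂ] E)) (σ : G →* (F ≃ₗᵢ[ℂ] F))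

noncomputable def averagedMap (B : E →L[ℂ] F) : E →L[ℂ] F :=
  ∫ g, (σ g⁻¹ : F →L[ℂ] F) ∘L B ∘L (ρ g : E →L[ℂ] E) ∂μ

variable {ρ σ} [TopologicalSpace G] [ContinuousInv G] [CompactSpace G] [OpensMeasurableSpace G]
  [IsFiniteMeasureOnCompacts μ] [FiniteDimensional ℂ E] [FiniteDimensional ℂ F]

theorem integrable_inv_comp_comp (hρ : ∀ x, Continuous fun g => ρ g x)
    (hσ : ∀ y, Continuous fun g => σ g y) (B : E →L[ℂ] F) :
    Integrable (fun g => (σ g⁻¹ : F →L[ℂ] F) ∘L B ∘L (ρ g : E →L[ℂ] E)) μ := by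
  have hρ' : Continuous fun g => (ρ g : E →L[ℂ] E) := continuous_clm_apply.2 hρ
  have hσ' : Continuous fun g => (σ g : F →L[ℂ] F) := continuous_clm_apply.2 hσ
  exact ((hσ'.comp continuous_inv).clm_comp (continuous_const.clm_comp hρ'))
    |>.integrable_of_hasCompactSupport (.of_compactSpace _)

theorem averagedMap_apply (hρ : ∀ x, Continuous fun g => ρ g x)
    (hσ : ∀ y, Continuous fun g => σ g y) (B : E →L[ℂ] F) (x : E) :
    averagedMap μ ρ σ B x = ∫ g, σ g⁻¹ (B (ρ g x)) ∂μ :=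
  ContinuousLinearMap.integral_apply (integrable_inv_comp_comp μ hρ hσ B) x

theorem averagedMap_intertwines [MeasurableMul G] [μ.IsMulRightInvariant]
    (hρ : ∀ x, Continuous fun g => ρ g x) (hσ : ∀ y, Continuous fun g => σ g y)
    (B : E →L[ℂ] F) (h : G) (x : E) :
    averagedMap μ ρ σ B (ρ h x) = σ h (averagedMap μ ρ σ B x) := by
  rw [averagedMap_apply μ hρ hσ, averagedMap_apply μ hρ hσ]
  calc ∫ g, σ g⁻¹ (B (ρ g (ρ h x))) ∂μ = ∫ g, σ h (σ (g * h)⁻¹ (B (ρ (g * h) x))) ∂μ := by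
        simp [mul_inv_rev, map_mul, LinearIsometryEquiv.coe_mul]
    _ = ∫ g, σ h (σ g⁻¹ (B (ρ g x))) ∂μ :=
        integral_mul_right_eq_self (fun g => σ h (σ g⁻¹ (B (ρ g x)))) h
    _ = σ h (∫ g, σ g⁻¹ (B (ρ g x)) ∂μ) := (σ h).toLinearIsometry.integral_comp_comm _

end Averaging

theorem inner_averagedMap_apply {G : Type*} [Group G] [TopologicalSpace G] [ContinuousInv G]
    [CompactSpace G] [MeasurableSpace G] [OpensMeasurableSpace G]
    (μ : Measure G) [IsFiniteMeasureOnCompacts μ]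
    {E F : Type*} [NormedAddCommGroup E] [InnerProductSpace ℂ E] [FiniteDimensional ℂ E]
    [NormedAddCommGroup F] [InnerProductSpace ℂ F] [FiniteDimensional ℂ F]
    {ρ : G →* (E ≃ₗᵢ[ℂ] E)} {σ : G →* (F ≃ₗᵢ[ℂ] F)}
    (hρ : ∀ x, Continuous fun g => ρ g x) (hσ : ∀ y, Continuous fun g => σ g y)
    (B : E →L[ℂ] F) (x : E) (y : F) :
    inner ℂ y (averagedMap μ ρ σ B x) = ∫ g, inner ℂ (σ g y) (B (ρ g x)) ∂μ := by
  have hint : Integrable (fun g => σ g⁻¹ (B (ρ g x))) μ :=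
    (integrable_inv_comp_comp μ hρ hσ B).apply_continuousLinearMap x
  rw [averagedMap_apply μ hρ hσ, ← integral_inner hint]
  congr 1 with g
  simp [LinearIsometryEquiv.inner_map_eq_flip]

theorem schur_orthogonality_relations_II_general
    {G : Type*} [Group G] [TopologicalSpace G] [IsTopologicalGroup G] [CompactSpace G]
    [MeasurableSpace G] [BorelSpace G]
    (μ : Measure G) [μ.IsHaarMeasure]
    {V : Type*} [NormedAddCommGroup V] [InnerProductSpace ℂ V] [FiniteDimensional ℂ V]
    {V' : Type*} [NormedAddCommGroup V'] [InnerProductSpace ℂ V'] [FiniteDimensional ℂ V']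
    (ρ : G →* (V ≃ₗᵢ[ℂ] V)) (ρ' : G →* (V' ≃ₗᵢ[ℂ] V'))
    (hcont : ∀ v : V, Continuous fun g : G => ρ g v)
    (hcont' : ∀ v : V', Continuous fun g : G => ρ' g v)
    (hirr : ∀ W : Submodule ℂ V, (∀ g : G, ∀ v ∈ W, ρ g v ∈ W) → W = ⊥ ∨ W = ⊤)
    (hirr' : ∀ W : Submodule ℂ V', (∀ g : G, ∀ v ∈ W, ρ' g v ∈ W) → W = ⊥ ∨ W = ⊤)
    (hneq : ¬ ∃ A : V ≃ₗ[ℂ] V', ∀ (g : G) (x : V), A (ρ g x) = ρ' g (A x))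
    (u v : V) (u' v' : V') :
    ∫ g : G, (inner ℂ (ρ g u) v : ℂ) * (starRingEnd ℂ) (inner ℂ (ρ' g u') v') ∂μ = 0 := by
  have := isMulRightInvariant_of_compactSpace μ
  set T := averagedMap μ ρ' ρ (InnerProductSpace.rankOne ℂ v v')
  have hT : T = 0 := ContinuousLinearMap.coe_injective <|
    eq_zero_of_intertwines_of_not_equiv (σ := fun g => (ρ' g).toLinearEquiv.toLinearMap)
      (τ := fun g => (ρ g).toLinearEquiv.toLinearMap) hirr' hirr hneq
      (averagedMap_intertwines μ hcont' hcont _)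
  calc ∫ g : G, (inner ℂ (ρ g u) v : ℂ) * (starRingEnd ℂ) (inner ℂ (ρ' g u') v') ∂μ
      = inner ℂ u (T u') := by
        rw [inner_averagedMap_apply μ hcont' hcont]
        congr 1 with g
        simp [mul_comm]
    _ = 0 := by simp [hT]

/-- **Schur's orthogonality relations II.**
If `ρ` and `ρ'` are two continuous finite-dimensional irreducible unitary representations of a
compact topological group `G` (with Haar probability measure `μ`) that are not equivalent, then
their matrix coefficients are orthogonal in `L²(G)`:
`∫_G ⟨ρ(g)u, v⟩ · conj ⟨ρ'(g)u', v'⟩ dg = 0`. -/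
theorem schur_orthogonality_relations_II
    {G : Type*} [Group G] [TopologicalSpace G] [IsTopologicalGroup G] [CompactSpace G]
    [MeasurableSpace G] [BorelSpace G]
    (μ : Measure G) [μ.IsHaarMeasure] [IsProbabilityMeasure μ]
    {V : Type*} [NormedAddCommGroup V] [InnerProductSpace ℂ V] [FiniteDimensional ℂ V]
    {V' : Type*} [NormedAddCommGroup V'] [InnerProductSpace ℂ V'] [FiniteDimensional ℂ V']
    (ρ : G →* (V ≃ₗᵢ[ℂ] V)) (ρ' : G →* (V' ≃ₗᵢ[ℂ] V'))
    (hcont : ∀ v : V, Continuous fun g : G => ρ g v)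
    (hcont' : ∀ v : V', Continuous fun g : G => ρ' g v)
    (hirr : ∀ W : Submodule ℂ V, (∀ g : G, ∀ v ∈ W, ρ g v ∈ W) → W = ⊥ ∨ W = ⊤)
    (hirr' : ∀ W : Submodule ℂ V', (∀ g : G, ∀ v ∈ W, ρ' g v ∈ W) → W = ⊥ ∨ W = ⊤)
    (hneq : ¬ ∃ A : V ≃ₗ[ℂ] V', ∀ (g : G) (x : V), A (ρ g x) = ρ' g (A x))
    (u v : V) (u' v' : V') :
    ∫ g : G, (inner ℂ (ρ g u) v : ℂ) * (starRingEnd ℂ) (inner ℂ (ρ' g u') v') ∂μ = 0 :=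
  schur_orthogonality_relations_II_general μ ρ ρ' hcont hcont' hirr hirr' hneq u v u' v'
end

section
/- Let G be a compact topological group equipped with its Haar probability measure dg, and let (ρ, V) be a continuous finite-dimensional irreducible unitary representation of G on a complex inner product space V of dimension d, with character χ(g) = Tr(ρ(g)). Then for all x, y ∈ G, ∫_G χ(x g y g⁻¹) dg = χ(x) χ(y) / d. -/
/-!
Averaging `ρ(g y g⁻¹)` over `G` gives an operator `T` that commutes with every `ρ(h)`, by left
invariance of Haar measure. By Schur's lemma `T` is the scalar `Tr T / d`, and `Tr T = χ(y)`
since trace is conjugation invariant. Hence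
`∫ χ(x g y g⁻¹) dg = Tr(ρ(x) T) = χ(x) χ(y) / d`.
-/

open MeasureTheory

namespace Module.End

variable {K V : Type*} [Field K] [IsAlgClosed K] [AddCommGroup V] [Module K V]
  [FiniteDimensional K V] {ι : Type*} {A : ι → End K V}

theorem exists_eq_smul_one_of_forall_commute [Nontrivial V]
    (hirr : ∀ W : Submodule K V, (∀ i, ∀ v ∈ W, A i v ∈ W) → W = ⊥ ∨ W = ⊤)
    {T : End K V} (hT : ∀ i, Commute (A i) T) : ∃ c : K, T = c • 1 := by
  obtain ⟨c, hc⟩ := exists_eigenvalue T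
  have htop : T.eigenspace c = ⊤ :=
    (hirr _ fun i => mapsTo_genEigenspace_of_comm (hT i).symm c 1).resolve_left hc
  refine ⟨c, LinearMap.ext fun v => ?_⟩
  simpa using mem_eigenspace_iff.1 (htop ▸ Submodule.mem_top : v ∈ T.eigenspace c)

theorem eq_trace_div_finrank_smul_one_of_forall_commute [CharZero K]
    (hirr : ∀ W : Submodule K V, (∀ i, ∀ v ∈ W, A i v ∈ W) → W = ⊥ ∨ W = ⊤)
    {T : End K V} (hT : ∀ i, Commute (A i) T) :
    T = (LinearMap.trace K V T / finrank K V) • 1 := by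
  cases subsingleton_or_nontrivial V
  · exact Subsingleton.elim _ _
  obtain ⟨c, rfl⟩ := exists_eq_smul_one_of_forall_commute hirr hT
  have hd : (finrank K V : K) ≠ 0 := Nat.cast_ne_zero.2 finrank_pos.ne'
  rw [map_smul, LinearMap.trace_one, smul_eq_mul, mul_div_cancel_right₀ _ hd]

end Module.End

def LinearIsometryEquiv.toContinuousLinearMapHom {R E : Type*} [Semiring R]
    [SeminormedAddCommGroup E] [Module R E] : (E ≃ₗᵢ[R] E) →* (E →L[R] E) where
  toFun e := e
  map_one' := rfl
  map_mul' _ _ := rfl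

theorem ContinuousLinearMap.trace_integral {V α : Type*} [NormedAddCommGroup V]
    [NormedSpace ℂ V] [FiniteDimensional ℂ V] [MeasurableSpace α] {μ : Measure α}
    {F : α → V →L[ℂ] V} (hF : Integrable F μ) :
    LinearMap.trace ℂ V (∫ a, F a ∂μ : V →L[ℂ] V) =
      ∫ a, LinearMap.trace ℂ V (F a : V →L[ℂ] V) ∂μ :=
  ((LinearMap.trace ℂ V ∘ₗ coeLM ℂ).toContinuousLinearMap.integral_comp_comm hF).symm

section Averaging

variable {G R : Type*} [Group G] [TopologicalSpace G] [ContinuousInv G] [CompactSpace G]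
  [MeasurableSpace G] [OpensMeasurableSpace G] (μ : Measure G) [IsFiniteMeasure μ]
  [NormedRing R] {U : G →* R}

theorem integrable_conj (hU : Continuous U) (A : R) :
    Integrable (fun g => U g * A * U g⁻¹) μ :=
  ((hU.mul continuous_const).mul (hU.comp continuous_inv)).integrable_of_hasCompactSupport
    (HasCompactSupport.of_compactSpace _)

variable [NormedSpace ℝ R] [IsScalarTower ℝ R R] [SMulCommClass ℝ R R]

noncomputable def conjAverage (U : G →* R) (A : R) : R := ∫ g, U g * A * U g⁻¹ ∂μ

theorem commute_conjAverage [MeasurableMul G] [μ.IsMulLeftInvariant] (hU : Continuous U)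
    (A : R) (h : G) : Commute (U h) (conjAverage μ U A) := by
  have hint := integrable_conj μ hU A
  have hinv : U h⁻¹ * U h = 1 := map_mul_eq_one U (inv_mul_cancel h)
  have hconj : U h * conjAverage μ U A * U h⁻¹ = conjAverage μ U A := calc
    _ = ∫ g, U h * (U g * A * U g⁻¹) * U h⁻¹ ∂μ := by
      rw [integral_mul_const_of_integrable (hint.const_mul _),
        integral_const_mul_of_integrable hint, conjAverage]
    _ = ∫ g, U (h * g) * A * U (h * g)⁻¹ ∂μ := by
      simp only [mul_inv_rev, map_mul, mul_assoc]
    _ = _ := integral_mul_left_eq_self (fun g => U g * A * U g⁻¹) h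
  calc U h * conjAverage μ U A = U h * conjAverage μ U A * U h⁻¹ * U h := by
        rw [mul_assoc _ (U h⁻¹), hinv, mul_one]
    _ = conjAverage μ U A * U h := by rw [hconj]

theorem trace_conjAverage {V : Type*} [NormedAddCommGroup V] [NormedSpace ℂ V]
    [FiniteDimensional ℂ V] [IsProbabilityMeasure μ] {U : G →* (V →L[ℂ] V)}
    (hU : Continuous U) (A : V →L[ℂ] V) :
    LinearMap.trace ℂ V (conjAverage μ U A : V →L[ℂ] V) =
      LinearMap.trace ℂ V (A : V →L[ℂ] V) := by
  have htrace (g : G) : LinearMap.trace ℂ V (U g * A * U g⁻¹ : V →L[ℂ] V) =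
      LinearMap.trace ℂ V (A : V →L[ℂ] V) := by
    rw [ContinuousLinearMap.toLinearMap_mul, LinearMap.trace_mul_comm,
      ← ContinuousLinearMap.toLinearMap_mul, ← mul_assoc, map_mul_eq_one U (inv_mul_cancel g),
      one_mul]
  rw [conjAverage, ContinuousLinearMap.trace_integral (integrable_conj μ hU A)]
  simp only [htrace, integral_const, probReal_univ, one_smul]

end Averaging

/-- For a continuous finite-dimensional irreducible unitary representation `ρ` of a compact
topological group `G` (Haar probability measure `μ`), with character `χ(g) = Tr(ρ(g))` and
dimension `d`, one has `∫_G χ(x g y g⁻¹) dg = χ(x) χ(y) / d` for all `x, y ∈ G`. -/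
theorem integral_character_adjoint_orbit
    {G : Type*} [Group G] [TopologicalSpace G] [IsTopologicalGroup G] [CompactSpace G]
    [MeasurableSpace G] [BorelSpace G]
    (μ : Measure G) [μ.IsHaarMeasure] [IsProbabilityMeasure μ]
    {V : Type*} [NormedAddCommGroup V] [InnerProductSpace ℂ V] [FiniteDimensional ℂ V]
    (ρ : G →* (V ≃ₗᵢ[ℂ] V))
    (hcont : ∀ v : V, Continuous fun g : G => ρ g v)
    (hirr : ∀ W : Submodule ℂ V, (∀ g : G, ∀ v ∈ W, ρ g v ∈ W) → W = ⊥ ∨ W = ⊤)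
    (χ : G → ℂ)
    (hχ : ∀ g : G, χ g = LinearMap.trace ℂ V ((ρ g).toLinearEquiv : V →ₗ[ℂ] V))
    (x y : G) :
    ∫ g : G, χ (x * g * y * g⁻¹) ∂μ = χ x * χ y / (Module.finrank ℂ V : ℂ) := by
  set U := LinearIsometryEquiv.toContinuousLinearMapHom.comp ρ
  have hU : Continuous U := continuous_clm_apply.2 hcont
  have htrace (g : G) : LinearMap.trace ℂ V (U g : V →L[ℂ] V) = χ g := (hχ g).symm
  set T := conjAverage μ U (U y)
  have hT : (T : V →ₗ[ℂ] V) = (χ y / Module.finrank ℂ V) • 1 := by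
    have hschur := Module.End.eq_trace_div_finrank_smul_one_of_forall_commute
      (A := fun g => (U g : V →ₗ[ℂ] V)) hirr (T := T) fun g =>
        (commute_conjAverage μ hU (U y) g).map ContinuousLinearMap.toLinearMapRingHom
    rwa [trace_conjAverage μ hU, htrace] at hschur
  calc ∫ g, χ (x * g * y * g⁻¹) ∂μ
      = ∫ g, LinearMap.trace ℂ V (U x * (U g * U y * U g⁻¹) : V →L[ℂ] V) ∂μ := by
        simp only [← map_mul, htrace, mul_assoc]
    _ = LinearMap.trace ℂ V (U x * T : V →L[ℂ] V) := by
        rw [← ContinuousLinearMap.trace_integral ((integrable_conj μ hU _).const_mul _),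
          integral_const_mul_of_integrable (integrable_conj μ hU _)]
        rfl
    _ = χ x * χ y / Module.finrank ℂ V := by
        rw [ContinuousLinearMap.toLinearMap_mul, hT, mul_smul_comm, mul_one, map_smul, htrace,
          smul_eq_mul, mul_div_assoc, mul_comm]
end

section
/- Let G be a compact topological group equipped with its Haar probability measure, and let (ρ, V) be a continuous finite-dimensional irreducible unitary representation of G of dimension d with character χ(g) = Tr(ρ(g)). Then for every integer g ≥ 1, ∫_{G^{2g}} χ([x₁,y₁]·[x₂,y₂]···[x_g,y_g]) dx₁ dy₁ ··· dx_g dy_g = d^{1−2g}, where [x,y] = x y x⁻¹ y⁻¹ denotes the commutator and the integral is with respect to the product of 2g copies of the Haar probability measure. -/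
open MeasureTheory
open scoped commutatorElement

/-!
Write `R : G →* (V →L[ℂ] V)` for `ρ` and `d = dim V`. By Schur's lemma, averaging the conjugates
`R x * A * R x⁻¹` of any operator `A` gives `(tr A / d) • 1`. Writing
`R ⁅x, y⁆ = (R x * R y * R x⁻¹) * R y⁻¹` and integrating in `x` first leaves
`d⁻¹ • ∫ χ y • R y⁻¹ dy`; expanding `χ y • 1` in the rank-one operators of an orthonormal basis
and averaging once more shows that this is `d⁻² • 1`. The `n` commutators are independent, so
the integral of `R` of their product is `(d⁻² • 1) ^ n`, whose trace is `d ^ (1 - 2n)`.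
-/

open InnerProductSpace

section PiProd

variable {α β A : Type*} [MeasurableSpace α] [MeasurableSpace β] {μ : Measure α} {ν : Measure β}
  [NormedRing A]

theorem integral_prod_mul_of_integrable [NormedAlgebra ℝ A] [SFinite μ] [SFinite ν] {f : α → A}
    {g : β → A} (hf : Integrable f μ) (hg : Integrable g ν) :
    ∫ z, f z.1 * g z.2 ∂μ.prod ν = (∫ x, f x ∂μ) * ∫ y, g y ∂ν := by
  rw [integral_prod _ (hf.mul_prod hg)]
  simp_rw [integral_const_mul_of_integrable hg]
  exact integral_mul_const_of_integrable hf

theorem List.prod_ofFn_piFinSuccAbove_zero_symm {M : Type*} [Monoid M] (f : α → M) {n : ℕ}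
    (p : α × (Fin n → α)) :
    (List.ofFn fun i => f ((MeasurableEquiv.piFinSuccAbove (fun _ => α) 0).symm p i)).prod
      = f p.1 * (List.ofFn fun i => f (p.2 i)).prod := by
  simp [List.ofFn_succ, MeasurableEquiv.piFinSuccAbove_symm_apply, Fin.insertNthEquiv]

theorem integrable_pi_ofFn_prod [SigmaFinite μ] {f : α → A} (hf : Integrable f μ) (n : ℕ) :
    Integrable (fun z : Fin n → α => (List.ofFn fun i => f (z i)).prod)
      (Measure.pi fun _ => μ) := by
  induction n with
  | zero => rw [Measure.pi_of_empty]; simp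
  | succ n ih =>
    rw [← (measurePreserving_piFinSuccAbove (fun _ => μ) 0).symm.integrable_comp_emb
      (MeasurableEquiv.measurableEmbedding _)]
    simpa only [Function.comp_def, List.prod_ofFn_piFinSuccAbove_zero_symm] using hf.mul_prod ih

theorem integral_pi_ofFn_prod [NormedAlgebra ℝ A] [CompleteSpace A] [SigmaFinite μ] {f : α → A}
    (hf : Integrable f μ) (n : ℕ) :
    ∫ z : Fin n → α, (List.ofFn fun i => f (z i)).prod ∂(Measure.pi fun _ => μ)
      = (∫ x, f x ∂μ) ^ n := by
  induction n with
  | zero => simp [measureReal_def]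
  | succ n ih =>
    rw [← (measurePreserving_piFinSuccAbove (fun _ => μ) 0).symm.integral_comp']
    simp_rw [List.prod_ofFn_piFinSuccAbove_zero_symm]
    rw [integral_prod_mul_of_integrable hf (integrable_pi_ofFn_prod hf n), ih, pow_succ']

end PiProd

theorem Continuous.integrable_prod_of_compactSpace {X Y E : Type*} [TopologicalSpace X]
    [TopologicalSpace Y] [CompactSpace X] [CompactSpace Y] [MeasurableSpace X] [MeasurableSpace Y]
    [OpensMeasurableSpace X] [OpensMeasurableSpace Y] [NormedAddCommGroup E] {μ : Measure X}
    {ν : Measure Y} [IsFiniteMeasure μ] [IsFiniteMeasure ν] {f : X × Y → E} (hf : Continuous f) :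
    Integrable f (μ.prod ν) := by
  have hsupp := HasCompactSupport.of_compactSpace f
  obtain ⟨C, hC⟩ := hsupp.exists_bound_of_continuous hf
  exact .of_bound (hsupp.stronglyMeasurable_of_prod hf).aestronglyMeasurable C (ae_of_all _ hC)

theorem Module.End.exists_eq_smul_one_of_forall_commute_s5 {K V ι : Type*} [Field K] [IsAlgClosed K]
    [AddCommGroup V] [Module K V] [FiniteDimensional K V] [Nontrivial V] (F : ι → Module.End K V)
    (hirr : ∀ W : Submodule K V, (∀ i, ∀ v ∈ W, F i v ∈ W) → W = ⊥ ∨ W = ⊤)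
    {T : Module.End K V} (hT : ∀ i, Commute T (F i)) : ∃ c : K, T = c • 1 := by
  obtain ⟨c, hc⟩ := T.exists_eigenvalue
  have htop : T.eigenspace c = ⊤ :=
    (hirr _ fun i v hv => Module.End.mapsTo_genEigenspace_of_comm (hT i) c 1 hv).resolve_left
      (Module.End.hasEigenvalue_iff.1 hc)
  exact ⟨c, LinearMap.ext fun v => Module.End.mem_eigenspace_iff.1 (htop ▸ Submodule.mem_top)⟩

theorem OrthonormalBasis.trace_smul_one_eq_sum_rankOne {𝕜 E ι : Type*} [RCLike 𝕜]
    [NormedAddCommGroup E] [InnerProductSpace 𝕜 E] [Fintype ι] (b : OrthonormalBasis ι 𝕜 E)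
    (M : E →L[𝕜] E) :
    LinearMap.trace 𝕜 E M • (1 : E →L[𝕜] E)
      = ∑ i, ∑ j, rankOne 𝕜 (b i) (b j) * M * rankOne 𝕜 (b j) (b i) := by
  have hterm (i j : ι) : rankOne 𝕜 (b i) (b j) * M * rankOne 𝕜 (b j) (b i)
      = inner 𝕜 (b j) (M (b j)) • rankOne 𝕜 (b i) (b i) := by
    rw [mul_assoc, ContinuousLinearMap.mul_def, ContinuousLinearMap.mul_def, comp_rankOne,
      rankOne_comp_rankOne]
  have htrace : LinearMap.trace 𝕜 E M = ∑ j, inner 𝕜 (b j) (M (b j)) :=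
    LinearMap.trace_eq_sum_inner _ b
  simp_rw [hterm, ← Finset.sum_smul, ← htrace, ← Finset.smul_sum, b.sum_rankOne_eq_id]
  rfl

section Trace

variable {V : Type*} [NormedAddCommGroup V] [NormedSpace ℂ V] [FiniteDimensional ℂ V]

noncomputable def traceCLM : (V →L[ℂ] V) →L[ℂ] ℂ :=
  LinearMap.toContinuousLinearMap (LinearMap.trace ℂ V ∘ₗ ContinuousLinearMap.coeLM ℂ)

@[simp] theorem traceCLM_apply (A : V →L[ℂ] V) : traceCLM A = LinearMap.trace ℂ V A := rfl

end Trace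

theorem trace_map_mul_mul_map_inv {G V : Type*} [Group G] [NormedAddCommGroup V]
    [NormedSpace ℂ V] (R : G →* (V →L[ℂ] V)) (A : V →L[ℂ] V) (x : G) :
    LinearMap.trace ℂ V (R x * A * R x⁻¹) = LinearMap.trace ℂ V A := by
  rw [LinearMap.trace_mul_cycle, ← ContinuousLinearMap.toLinearMap_mul,
    map_mul_eq_one R (inv_mul_cancel x)]
  simp

theorem continuous_commutatorElement {G : Type*} [Group G] [TopologicalSpace G]
    [IsTopologicalGroup G] : Continuous fun p : G × G => ⁅p.1, p.2⁆ := by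
  simp only [commutatorElement_def]
  fun_prop

section Representation

variable {G V : Type*} [Group G] [TopologicalSpace G] [IsTopologicalGroup G] [CompactSpace G]
  [MeasurableSpace G] [BorelSpace G] (μ : Measure G) [IsProbabilityMeasure μ]
  [NormedAddCommGroup V] [NormedSpace ℂ V] {R : G →* (V →L[ℂ] V)} (hR : Continuous R)
include hR

theorem integrable_map_mul_mul_map_inv (A : V →L[ℂ] V) :
    Integrable (fun x => R x * A * R x⁻¹) μ :=
  ((hR.mul continuous_const).mul (hR.comp continuous_inv)).integrable_of_hasCompactSupport
    (.of_compactSpace _)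

theorem integral_map_mul_mul_map_inv [μ.IsMulLeftInvariant] [FiniteDimensional ℂ V]
    (hirr : ∀ W : Submodule ℂ V, (∀ g, ∀ v ∈ W, R g v ∈ W) → W = ⊥ ∨ W = ⊤) (A : V →L[ℂ] V) :
    ∫ x, R x * A * R x⁻¹ ∂μ = (LinearMap.trace ℂ V A / Module.finrank ℂ V) • 1 := by
  rcases subsingleton_or_nontrivial V with _ | _
  · exact Subsingleton.elim _ _
  have hint := integrable_map_mul_mul_map_inv μ hR A
  have hconj (g : G) :
      R g * (∫ x, R x * A * R x⁻¹ ∂μ) * R g⁻¹ = ∫ x, R x * A * R x⁻¹ ∂μ := by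
    rw [← integral_const_mul_of_integrable hint,
      ← integral_mul_const_of_integrable (hint.const_mul _)]
    have := integral_mul_left_eq_self (μ := μ) (fun x => R x * A * R x⁻¹) g
    simp only [mul_inv_rev, map_mul, mul_assoc] at this ⊢
    exact this
  set T := ∫ x, R x * A * R x⁻¹ ∂μ
  have hcomm (g : G) : Commute T (R g) := by
    calc T * R g = R g * T * (R g⁻¹ * R g) := by rw [← mul_assoc, hconj]
      _ = R g * T := by rw [map_mul_eq_one R (inv_mul_cancel g), mul_one]
  obtain ⟨c, hc⟩ := Module.End.exists_eq_smul_one_of_forall_commute_s5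
    (fun g => (R g : Module.End ℂ V)) hirr
    fun g => (hcomm g).map ContinuousLinearMap.toLinearMapRingHom
  have hT : T = c • 1 := ContinuousLinearMap.coe_injective hc
  have htrace : LinearMap.trace ℂ V T = LinearMap.trace ℂ V A := by
    rw [← traceCLM_apply, ← traceCLM.integral_comp_comm hint]
    simp [trace_map_mul_mul_map_inv]
  have htrace_smul : LinearMap.trace ℂ V T = c * Module.finrank ℂ V := by simp [hT]
  have hd : (Module.finrank ℂ V : ℂ) ≠ 0 := Nat.cast_ne_zero.2 Module.finrank_pos.ne'
  rw [hT, ← htrace, htrace_smul, mul_div_cancel_right₀ c hd]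

end Representation

section Character

variable {G V : Type*} [Group G] [TopologicalSpace G] [IsTopologicalGroup G] [CompactSpace G]
  [MeasurableSpace G] [BorelSpace G] (μ : Measure G) [IsProbabilityMeasure μ]
  [μ.IsMulLeftInvariant] [NormedAddCommGroup V] [InnerProductSpace ℂ V] [FiniteDimensional ℂ V]
  {R : G →* (V →L[ℂ] V)}
  (hR : Continuous R) (hirr : ∀ W : Submodule ℂ V, (∀ g, ∀ v ∈ W, R g v ∈ W) → W = ⊥ ∨ W = ⊤)
include hR hirr

theorem integral_trace_smul_map_inv :
    ∫ y, LinearMap.trace ℂ V (R y) • R y⁻¹ ∂μ = (Module.finrank ℂ V : ℂ)⁻¹ • 1 := by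
  classical
  set b := stdOrthonormalBasis ℂ V
  have hexpand (y : G) : LinearMap.trace ℂ V (R y) • R y⁻¹
      = ∑ i, ∑ j, rankOne ℂ (b i) (b j) * (R y * rankOne ℂ (b j) (b i) * R y⁻¹) := by
    rw [← smul_one_mul, b.trace_smul_one_eq_sum_rankOne, Finset.sum_mul]
    simp_rw [Finset.sum_mul, mul_assoc]
  have hint (i j) : Integrable
      (fun y => rankOne ℂ (b i) (b j) * (R y * rankOne ℂ (b j) (b i) * R y⁻¹)) μ :=
    (integrable_map_mul_mul_map_inv μ hR _).const_mul _
  simp_rw [hexpand]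
  rw [integral_finsetSum _ fun i _ => integrable_finsetSum _ fun j _ => hint i j]
  simp_rw [integral_finsetSum _ fun j _ => hint _ j,
    integral_const_mul_of_integrable (integrable_map_mul_mul_map_inv μ hR _),
    integral_map_mul_mul_map_inv μ hR hirr, trace_rankOne, b.inner_eq_ite]
  simp only [ite_div, one_div, zero_div, mul_ite, mul_zero, mul_smul_comm, mul_one, ite_smul,
    zero_smul, Finset.sum_ite_eq, Finset.mem_univ, if_true, ← Finset.smul_sum,
    b.sum_rankOne_eq_id]
  rfl

theorem integral_map_commutatorElement :
    ∫ p : G × G, R ⁅p.1, p.2⁆ ∂μ.prod μ = ((Module.finrank ℂ V : ℂ) ^ 2)⁻¹ • 1 := by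
  rw [integral_prod_symm (fun p : G × G => R ⁅p.1, p.2⁆)
    (hR.comp continuous_commutatorElement).integrable_prod_of_compactSpace]
  have hinner (y : G) : ∫ x, R ⁅x, y⁆ ∂μ
      = (Module.finrank ℂ V : ℂ)⁻¹ • LinearMap.trace ℂ V (R y) • R y⁻¹ := by
    simp_rw [commutatorElement_def, map_mul]
    rw [integral_mul_const_of_integrable (integrable_map_mul_mul_map_inv μ hR _),
      integral_map_mul_mul_map_inv μ hR hirr, smul_one_mul, div_eq_inv_mul, mul_smul]
  simp_rw [hinner]
  rw [integral_smul, integral_trace_smul_map_inv μ hR hirr, smul_smul, ← mul_inv, sq]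

end Character

theorem zpow_one_sub_two_mul {K : Type*} [DivisionRing K] (a : K) (n : ℕ) :
    a ^ (1 - 2 * (n : ℤ)) = (a ^ 2)⁻¹ ^ n * a := by
  rw [show (1 : ℤ) - 2 * n = -((2 * n : ℕ) : ℤ) + 1 by push_cast; ring,
    zpow_add' (Or.inr (Or.inl (by omega))), zpow_neg, zpow_natCast, zpow_one, pow_mul, inv_pow]

theorem integral_character_product_commutators_general
    {G : Type*} [Group G] [TopologicalSpace G] [IsTopologicalGroup G] [CompactSpace G]
    [MeasurableSpace G] [BorelSpace G]
    (μ : Measure G) [μ.IsHaarMeasure] [IsProbabilityMeasure μ]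
    {V : Type*} [NormedAddCommGroup V] [InnerProductSpace ℂ V] [FiniteDimensional ℂ V]
    (ρ : G →* (V ≃ₗᵢ[ℂ] V))
    (hcont : ∀ v : V, Continuous fun g : G => ρ g v)
    (hirr : ∀ W : Submodule ℂ V, (∀ g : G, ∀ v ∈ W, ρ g v ∈ W) → W = ⊥ ∨ W = ⊤)
    (χ : G → ℂ)
    (hχ : ∀ g : G, χ g = LinearMap.trace ℂ V ((ρ g).toLinearEquiv : V →ₗ[ℂ] V))
    (n : ℕ) :
    ∫ z : Fin n → G × G,
        χ (((List.finRange n).map fun i => ⁅(z i).1, (z i).2⁆).prod)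
        ∂(Measure.pi fun _ : Fin n => μ.prod μ)
      = (Module.finrank ℂ V : ℂ) ^ (1 - 2 * (n : ℤ)) := by
  let R : G →* (V →L[ℂ] V) :=
    (unitary (V →L[ℂ] V)).subtype.comp (Unitary.linearIsometryEquiv.symm.toMonoidHom.comp ρ)
  have hR : Continuous R := continuous_clm_apply.2 hcont
  have hP : Integrable (fun p : G × G => R ⁅p.1, p.2⁆) (μ.prod μ) :=
    (hR.comp continuous_commutatorElement).integrable_prod_of_compactSpace
  calc _ = ∫ z : Fin n → G × G, traceCLM (List.ofFn fun i => R ⁅(z i).1, (z i).2⁆).prod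
        ∂(Measure.pi fun _ : Fin n => μ.prod μ) := by
        congr 1 with z
        rw [hχ, ← List.ofFn_eq_map, traceCLM_apply]
        show LinearMap.trace ℂ V (R (List.ofFn _).prod) = _
        rw [map_list_prod, List.map_ofFn]
        rfl
    _ = traceCLM ((((Module.finrank ℂ V : ℂ) ^ 2)⁻¹ • 1) ^ n) := by
        rw [traceCLM.integral_comp_comm (integrable_pi_ofFn_prod hP n), integral_pi_ofFn_prod hP,
          integral_map_commutatorElement μ hR hirr]
    _ = (Module.finrank ℂ V : ℂ) ^ (1 - 2 * (n : ℤ)) := by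
        simp [smul_pow, zpow_one_sub_two_mul]

/-- For a continuous finite-dimensional irreducible unitary representation `ρ` of a compact
topological group `G` (Haar probability measure `μ`), with character `χ(g) = Tr(ρ(g))` and
dimension `d`, for every integer `g ≥ 1` (here `n`),
`∫_{G^{2n}} χ([x₁,y₁]⋯[xₙ,yₙ]) dx dy = d^(1-2n)`,
where `[x,y] = x y x⁻¹ y⁻¹` and the integral is over `n` independent pairs, each distributed
according to the product of two copies of the Haar probability measure. -/
theorem integral_character_product_commutators
    {G : Type*} [Group G] [TopologicalSpace G] [IsTopologicalGroup G] [CompactSpace G]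
    [MeasurableSpace G] [BorelSpace G]
    (μ : Measure G) [μ.IsHaarMeasure] [IsProbabilityMeasure μ]
    {V : Type*} [NormedAddCommGroup V] [InnerProductSpace ℂ V] [FiniteDimensional ℂ V]
    (ρ : G →* (V ≃ₗᵢ[ℂ] V))
    (hcont : ∀ v : V, Continuous fun g : G => ρ g v)
    (hirr : ∀ W : Submodule ℂ V, (∀ g : G, ∀ v ∈ W, ρ g v ∈ W) → W = ⊥ ∨ W = ⊤)
    (χ : G → ℂ)
    (hχ : ∀ g : G, χ g = LinearMap.trace ℂ V ((ρ g).toLinearEquiv : V →ₗ[ℂ] V))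
    (n : ℕ) (hn : 1 ≤ n) :
    ∫ z : Fin n → G × G,
        χ (((List.finRange n).map fun i => ⁅(z i).1, (z i).2⁆).prod)
        ∂(Measure.pi fun _ : Fin n => μ.prod μ)
      = (Module.finrank ℂ V : ℂ) ^ (1 - 2 * (n : ℤ)) :=
  integral_character_product_commutators_general μ ρ hcont hirr χ hχ n
end

section
/- For an integer N ≥ 2 and a nonincreasing tuple λ = (λ₁ ≥ λ₂ ≥ … ≥ λ_N) of nonnegative integers with λ_N = 0 and λ ≠ (0,…,0), the quantity d_λ = ∏_{1≤i<j≤N} (λ_i − λ_j + j − i)/(j − i) satisfies d_λ ≥ N. -/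
open Finset

private lemma tele1 (n : ℕ) : ∏ i ∈ range n, (((i:ℚ)+2)/((i:ℚ)+1)) = (n:ℚ)+1 := by
  induction n with
  | zero => simp
  | succ n ih =>
    rw [prod_range_succ, ih]
    have h : ((n:ℚ)+1) ≠ 0 := by positivity
    push_cast; field_simp; ring

private lemma tele2 (n : ℕ) : ∏ i ∈ range n, (((i:ℚ)+3)/((i:ℚ)+2)) = ((n:ℚ)+2)/2 := by
  induction n with
  | zero => norm_num
  | succ n ih =>
    rw [prod_range_succ, ih]
    have h : ((n:ℚ)+2) ≠ 0 := by positivity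
    push_cast; field_simp; ring



/-- The Weyl dimension of a nonincreasing tuple `λ ∈ ℤ^N`:
`d_λ = ∏_{1 ≤ i < j ≤ N} (λ_i − λ_j + j − i)/(j − i)`. -/
def weylDim (N : ℕ) (l : Fin N → ℤ) : ℚ :=
  ∏ p ∈ Finset.univ.filter (fun p : Fin N × Fin N => p.1 < p.2),
    (((l p.1 : ℚ) - (l p.2 : ℚ) + ((p.2 : ℕ) : ℚ) - ((p.1 : ℕ) : ℚ)) /
      (((p.2 : ℕ) : ℚ) - ((p.1 : ℕ) : ℚ)))

/-- For `N ≥ 2` and a nonincreasing tuple `λ = (λ₁ ≥ … ≥ λ_N)` of nonnegative integers with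
`λ_N = 0` and `λ ≠ (0,…,0)`, the Weyl dimension satisfies `d_λ ≥ N`. -/
theorem weylDim_ge_of_nontrivial (N : ℕ) (hN : 2 ≤ N) (l : Fin N → ℤ)
    (hmono : ∀ i j : Fin N, i ≤ j → l j ≤ l i)
    (hpos : ∀ i : Fin N, 0 ≤ l i)
    (hlast : l ⟨N - 1, by omega⟩ = 0)
    (hne : l ≠ 0) :
    (N : ℚ) ≤ weylDim N l := by
  classical
  have hNpos : 0 < N := by omega
  -- maximal nonzero index M
  have hsne : (univ.filter (fun i : Fin N => l i ≠ 0)).Nonempty := by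
    rcases Function.ne_iff.mp hne with ⟨i, hi⟩
    exact ⟨i, by simpa using hi⟩
  set M : Fin N := (univ.filter (fun i : Fin N => l i ≠ 0)).max' hsne with hMdef
  have hMne : l M ≠ 0 := by
    have := Finset.max'_mem _ hsne
    simpa [← hMdef] using this
  set k : ℕ := M.val + 1 with hkdef
  have hkN : k ≤ N - 1 := by
    by_contra hcon
    have hMval : M.val = N - 1 := by have := M.isLt; omega
    exact hMne (by rw [show M = ⟨N-1, by omega⟩ from Fin.ext hMval]; exact hlast)
  have hk1 : 1 ≤ k := by omega
  have hzero : ∀ j : Fin N, k ≤ j.val → l j = 0 := by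
    intro j hj
    by_contra hc
    have hjs : j ∈ univ.filter (fun i : Fin N => l i ≠ 0) := by simpa using hc
    have hle := Finset.le_max' _ j hjs
    rw [← hMdef] at hle
    rw [Fin.le_def] at hle
    omega
  have hone : ∀ i : Fin N, i.val < k → 1 ≤ l i := by
    intro i hi
    have h1 : l M ≤ l i := hmono i M (by rw [Fin.le_def]; omega)
    have h2 := hpos M
    omega
  set kF : Fin N := ⟨k, by omega⟩ with hkF
  have hlkF : l kF = 0 := hzero kF (le_refl _)
  -- bound functions
  set bg : ℕ → ℚ := fun i => ((k:ℚ) - i + 1)/((k:ℚ) - i) with hbg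
  set bh : ℕ → ℚ := fun j => ((j:ℚ) - k + 2)/((j:ℚ) - k + 1) with hbh
  set g : Fin N × Fin N → ℚ :=
    fun p => if p.2 = kF ∧ p.1.val < k then bg p.1.val else 1 with hgdef
  set h : Fin N × Fin N → ℚ :=
    fun p => if p.1 = M ∧ k + 1 ≤ p.2.val then bh p.2.val else 1 with hhdef
  -- product of g
  have hg : ∏ p ∈ univ.filter (fun p : Fin N × Fin N => p.1 < p.2), g p = (k:ℚ) + 1 := by
    have e1 : ∏ p ∈ univ.filter (fun p : Fin N × Fin N => p.1 < p.2), g p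
        = ∏ p : Fin N × Fin N, g p := by
      rw [Finset.prod_filter]
      refine Finset.prod_congr rfl fun p _ => ?_
      by_cases hc : p.1 < p.2
      · simp [hc]
      · simp only [hgdef]
        rw [if_neg hc, if_neg]
        rintro ⟨h1, h2⟩
        exact hc (by rw [h1, Fin.lt_def, hkF]; exact h2)
    rw [e1, Fintype.prod_prod_type]
    have e2 : ∀ i : Fin N, ∏ j : Fin N, g (i, j) = if i.val < k then bg i.val else 1 := by
      intro i
      by_cases hik : i.val < k
      · have e : ∀ j : Fin N, g (i, j) = if j = kF then bg i.val else 1 := by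
          intro j; simp only [hgdef]
          by_cases hj : j = kF <;> simp [hj, hik]
        rw [Finset.prod_congr rfl (fun j _ => e j), Finset.prod_ite_eq' univ kF
          (fun _ => bg i.val)]
        simp [hik]
      · have e : ∀ j : Fin N, g (i, j) = 1 := by
          intro j; simp only [hgdef]; rw [if_neg]; rintro ⟨-, h2⟩; exact hik h2
        rw [Finset.prod_congr rfl (fun j _ => e j)]
        simp [hik]
    rw [Finset.prod_congr rfl (fun i _ => e2 i),
      Fin.prod_univ_eq_prod_range (fun i => if i < k then bg i else 1) N]
    have e3 : (range N).filter (fun i => i < k) = range k := by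
      ext a; simp only [mem_filter, mem_range]; omega
    rw [← Finset.prod_filter, e3]
    have e4 := Finset.prod_range_reflect (fun j : ℕ => ((j:ℚ)+2)/((j:ℚ)+1)) k
    rw [tele1] at e4
    rw [← e4]
    refine Finset.prod_congr rfl fun j hj => ?_
    simp only [mem_range] at hj
    have h1 : ((k - 1 - j : ℕ) : ℚ) = (k:ℚ) - 1 - j := by
      have e : k - 1 - j = k - (1 + j) := by omega
      rw [e, Nat.cast_sub (by omega)]; push_cast; ring
    rw [hbg]
    simp only [h1]
    congr 1 <;> ring
  -- product of h
  have hh : ∏ p ∈ univ.filter (fun p : Fin N × Fin N => p.1 < p.2), h p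
      = ((N:ℚ) - k + 1)/2 := by
    have e1 : ∏ p ∈ univ.filter (fun p : Fin N × Fin N => p.1 < p.2), h p
        = ∏ p : Fin N × Fin N, h p := by
      rw [Finset.prod_filter]
      refine Finset.prod_congr rfl fun p _ => ?_
      by_cases hc : p.1 < p.2
      · simp [hc]
      · simp only [hhdef]
        rw [if_neg hc, if_neg]
        rintro ⟨h1, h2⟩
        exact hc (by rw [h1, Fin.lt_def]; omega)
    rw [e1, Fintype.prod_prod_type]
    have e2 : ∀ i : Fin N, ∏ j : Fin N, h (i, j)
        = if i = M then (∏ j : Fin N, if k + 1 ≤ j.val then bh j.val else 1) else 1 := by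
      intro i
      by_cases hi : i = M
      · rw [if_pos hi]
        refine Finset.prod_congr rfl fun j _ => ?_
        simp only [hhdef]
        by_cases hj : k + 1 ≤ j.val <;> simp [hi, hj]
      · rw [if_neg hi]
        have e : ∀ j : Fin N, h (i, j) = 1 := by
          intro j; simp only [hhdef]; rw [if_neg]; rintro ⟨h1, -⟩; exact hi h1
        rw [Finset.prod_congr rfl (fun j _ => e j)]; simp
    rw [Finset.prod_congr rfl (fun i _ => e2 i), Finset.prod_ite_eq' univ M
      (fun _ => (∏ j : Fin N, if k + 1 ≤ j.val then bh j.val else 1))]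
    simp only [mem_univ, if_pos]
    rw [Fin.prod_univ_eq_prod_range (fun j => if k + 1 ≤ j then bh j else 1) N]
    have e3 : (range N).filter (fun j => k + 1 ≤ j) = Finset.Ico (k+1) N := by
      ext a; simp only [mem_filter, mem_range, mem_Ico]; omega
    rw [← Finset.prod_filter, e3, Finset.prod_Ico_eq_prod_range]
    have e5 : ∀ t ∈ range (N - (k+1)), bh (k + 1 + t) = ((t:ℚ)+3)/((t:ℚ)+2) := by
      intro t _
      rw [hbh]
      push_cast
      congr 1 <;> ring
    rw [Finset.prod_congr rfl e5, tele2]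
    rw [Nat.cast_sub (by omega)]
    push_cast
    ring
  -- each bound factor is nonneg
  have hA : ∀ p ∈ univ.filter (fun p : Fin N × Fin N => p.1 < p.2), (0:ℚ) ≤ g p * h p := by
    intro p _
    have hgnn : (0:ℚ) ≤ g p := by
      simp only [hgdef]
      by_cases hc : p.2 = kF ∧ p.1.val < k
      · rw [if_pos hc, hbg]
        have : (p.1.val : ℚ) < k := by exact_mod_cast hc.2
        apply div_nonneg <;> linarith
      · rw [if_neg hc]; norm_num
    have hhnn : (0:ℚ) ≤ h p := by
      simp only [hhdef]
      by_cases hc : p.1 = M ∧ k + 1 ≤ p.2.val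
      · rw [if_pos hc, hbh]
        have : (k:ℚ) + 1 ≤ p.2.val := by exact_mod_cast hc.2
        apply div_nonneg <;> linarith
      · rw [if_neg hc]; norm_num
    exact mul_nonneg hgnn hhnn
  -- each bound factor is ≤ the actual factor
  have hB : ∀ p ∈ univ.filter (fun p : Fin N × Fin N => p.1 < p.2),
      g p * h p ≤ (((l p.1 : ℚ) - (l p.2 : ℚ) + ((p.2 : ℕ) : ℚ) - ((p.1 : ℕ) : ℚ)) /
        (((p.2 : ℕ) : ℚ) - ((p.1 : ℕ) : ℚ))) := by
    intro p hp
    have hlt : p.1 < p.2 := by simpa using hp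
    have hltv : p.1.val < p.2.val := hlt
    have hden : (0:ℚ) < ((p.2 : ℕ):ℚ) - ((p.1 : ℕ):ℚ) := by
      have : ((p.1:ℕ):ℚ) < ((p.2:ℕ):ℚ) := by exact_mod_cast hltv
      linarith
    by_cases hcg : p.2 = kF ∧ p.1.val < k
    · have hch : ¬(p.1 = M ∧ k + 1 ≤ p.2.val) := by
        rintro ⟨-, h2⟩
        rw [hcg.1] at h2
        simp only [hkF] at h2
        omega
      simp only [hgdef, hhdef, if_pos hcg, if_neg hch, mul_one, hbg]
      have hl2 : l p.2 = 0 := by rw [hcg.1]; exact hlkF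
      have hl1 : (1:ℚ) ≤ (l p.1 : ℚ) := by exact_mod_cast hone p.1 hcg.2
      have hv2 : ((p.2:ℕ):ℚ) = (k:ℚ) := by rw [hcg.1]
      rw [hl2, hv2]
      have hdk : (0:ℚ) < (k:ℚ) - ((p.1:ℕ):ℚ) := by
        have : ((p.1:ℕ):ℚ) < (k:ℚ) := by exact_mod_cast hcg.2
        linarith
      rw [div_le_div_iff₀ hdk hdk]
      simp only [Int.cast_zero]
      nlinarith [mul_nonneg (by linarith : (0:ℚ) ≤ (l p.1 : ℚ) - 1) hdk.le]
    · by_cases hch : p.1 = M ∧ k + 1 ≤ p.2.val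
      · rw [hgdef, hhdef]
        simp only [if_neg hcg, if_pos hch, one_mul, hbh]
        have hl2 : l p.2 = 0 := hzero p.2 (by omega)
        have hl1 : (1:ℚ) ≤ (l p.1 : ℚ) := by
          have : p.1.val < k := by rw [hch.1]; omega
          exact_mod_cast hone p.1 this
        have hv1 : ((p.1:ℕ):ℚ) = (k:ℚ) - 1 := by
          rw [hch.1]
          have : (M.val : ℚ) = (k:ℚ) - 1 := by rw [hkdef]; push_cast; ring
          exact this
        have hj : (k:ℚ) + 1 ≤ ((p.2:ℕ):ℚ) := by exact_mod_cast hch.2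
        rw [hl2, hv1]
        have hd1 : (0:ℚ) < ((p.2:ℕ):ℚ) - (k:ℚ) + 1 := by linarith
        have hd2 : (0:ℚ) < ((p.2:ℕ):ℚ) - ((k:ℚ) - 1) := by linarith
        rw [div_le_div_iff₀ hd1 hd2]
        simp only [Int.cast_zero]
        nlinarith [mul_nonneg (by linarith : (0:ℚ) ≤ (l p.1 : ℚ) - 1) hd1.le]
      · rw [hgdef, hhdef]
        simp only [if_neg hcg, if_neg hch, one_mul]
        rw [one_le_div hden]
        have hml : l p.2 ≤ l p.1 := hmono p.1 p.2 hlt.le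
        have : ((l p.2 : ℤ):ℚ) ≤ ((l p.1 : ℤ):ℚ) := by exact_mod_cast hml
        linarith
  -- assemble
  have hfinal : (N:ℚ) ≤ ∏ p ∈ univ.filter (fun p : Fin N × Fin N => p.1 < p.2),
      (g p * h p) := by
    rw [Finset.prod_mul_distrib, hg, hh]
    have c1 : (1:ℚ) ≤ (k:ℚ) := by exact_mod_cast hk1
    have c2 : (k:ℚ) ≤ (N:ℚ) - 1 := by
      have e : (k:ℚ) ≤ ((N-1:ℕ):ℚ) := by exact_mod_cast hkN
      rwa [Nat.cast_sub (by omega), Nat.cast_one] at e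
    nlinarith [mul_nonneg (sub_nonneg.mpr c1) (sub_nonneg.mpr c2)]
  unfold weylDim
  exact hfinal.trans (Finset.prod_le_prod hA hB)
end

section
/- For every real s > 1, the supremum over all integers N ≥ 2 of the Witten zeta value ζ_{SU(N)}(s) = Σ_λ d_λ^{−s} is finite, where the sum is over all nonincreasing tuples λ = (λ₁ ≥ … ≥ λ_N) of nonnegative integers with λ_N = 0, and d_λ = ∏_{1≤i<j≤N} (λ_i − λ_j + j − i)/(j − i). -/
/-- The highest weights of `SU(N)`: nonincreasing tuples of nonnegative integers whose last
entry vanishes. -/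
def SUWeight (N : ℕ) : Set (Fin N → ℤ) :=
  {l | (∀ i j : Fin N, i ≤ j → l j ≤ l i) ∧ (∀ i : Fin N, 0 ≤ l i) ∧
    ∀ h : N - 1 < N, l ⟨N - 1, h⟩ = 0}

/-- The Witten zeta function of `SU(N)`: `ζ_{SU(N)}(s) = Σ_λ d_λ^{−s}`, summing over all
highest weights of `SU(N)`, with values in `[0,∞]`. -/
noncomputable def suZeta (N : ℕ) (s : ℝ) : ENNReal :=
  ∑' l : SUWeight N, ENNReal.ofReal ((weylDim N l.1 : ℝ) ^ (-s))

/-!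
A nonzero highest weight `λ` of `SU(N)` with exactly `L` nonzero entries is `μ + c ϖ_L`, where
`μ` is a highest weight of `SU(L)`, `c ≥ 1` and `ϖ_L = (1, …, 1, 0, …, 0)` is the `L`-th
fundamental weight. All factors of the Weyl product are `≥ 1`, and those on the hook of pairs
`(i, L + 1)`, `i < L`, and `(L, j)`, `j > L`, telescope to
`d_λ ≥ d_μ (c + 1) (L + 1) (N - L + 1) / 4`. Summing over `c` and `μ` gives
`ζ_N(s) ≤ 1 + Σ_{L < N} a_{N,L} ζ_L(s)` with `a_{N,L} ≍ ((L + 1) (N - L + 1))^{-s}`, whose double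
sum is a Cauchy product of two convergent series when `s > 1`. The recursion then bounds every
`ζ_N(s)` by `∏_m (1 + Σ_L a_{m,L}) ≤ exp (Σ_{m,L} a_{m,L})`.
-/

open Finset
open scoped ENNReal

def weylFactor (a : ℕ → ℤ) (i j : ℕ) : ℚ := ((a i : ℚ) - a j + j - i) / (j - i)

def weylRow (a : ℕ → ℤ) (j : ℕ) : ℚ := ∏ i ∈ range j, weylFactor a i j

def weylDimSeq (n : ℕ) (a : ℕ → ℤ) : ℚ := ∏ j ∈ range n, weylRow a j

section weylFactor

variable {a : ℕ → ℤ} {i j : ℕ}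

lemma le_weylFactor (hij : i < j) {c : ℚ} (hc : c ≤ a i - a j) :
    (c + j - i) / (j - i) ≤ weylFactor a i j := by
  have hji : (i : ℚ) < j := by exact_mod_cast hij
  unfold weylFactor
  gcongr

lemma one_le_weylFactor (ha : Antitone a) (hij : i < j) : 1 ≤ weylFactor a i j := by
  have hji : (i : ℚ) < j := by exact_mod_cast hij
  have h := le_weylFactor (a := a) hij (c := 0) (by exact_mod_cast sub_nonneg.2 (ha hij.le))
  rwa [zero_add, div_self (sub_ne_zero.2 hji.ne')] at h

lemma one_le_weylRow (ha : Antitone a) (j : ℕ) : 1 ≤ weylRow a j :=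
  one_le_prod fun _ hi => one_le_weylFactor ha (mem_range.1 hi)

lemma weylFactor_le_weylRow (ha : Antitone a) (hij : i < j) : weylFactor a i j ≤ weylRow a j := by
  rw [weylRow, ← mul_prod_erase _ _ (mem_range.2 hij)]
  exact le_mul_of_one_le_right (zero_le_one.trans (one_le_weylFactor ha hij))
    (one_le_prod fun i' hi' => one_le_weylFactor ha (mem_range.1 (mem_of_mem_erase hi')))

end weylFactor

lemma weylDimSeq_congr {n : ℕ} {a b : ℕ → ℤ} {c : ℤ} (h : ∀ i < n, a i = b i + c) :
    weylDimSeq n a = weylDimSeq n b := by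
  refine prod_congr rfl fun j hj => prod_congr rfl fun i hi => ?_
  have hj := mem_range.1 hj
  rw [weylFactor, weylFactor, h j hj, h i ((mem_range.1 hi).trans hj)]
  push_cast
  ring_nf

lemma one_le_weylDimSeq {a : ℕ → ℤ} (ha : Antitone a) (n : ℕ) : 1 ≤ weylDimSeq n a :=
  one_le_prod fun j _ => one_le_weylRow ha j

lemma prod_range_add_three_div_add_two (n : ℕ) :
    ∏ t ∈ range n, ((t : ℚ) + 3) / (t + 2) = ((n : ℚ) + 2) / 2 := by
  induction n with
  | zero => norm_num
  | succ n ih =>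
    rw [prod_range_succ, ih]
    push_cast
    field_simp
    ring

lemma prod_range_add_two_sub_div_add_one_sub (m : ℕ) :
    ∏ i ∈ range m, ((m : ℚ) + 2 - i) / (m + 1 - i) = ((m : ℚ) + 2) / 2 := by
  rw [← prod_range_add_three_div_add_two, ← prod_range_reflect]
  refine prod_congr rfl fun i hi => ?_
  have hi := mem_range.1 hi
  rw [Nat.cast_sub (by omega), Nat.cast_sub (by omega)]
  push_cast
  ring_nf

section gap

variable {a : ℕ → ℤ} {M : ℕ}

lemma one_le_sub_of_gap (ha : Antitone a) (hgap : a (M + 1) < a M) {i j : ℕ} (hi : i ≤ M)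
    (hj : M + 1 ≤ j) : (1 : ℚ) ≤ a i - a j := by
  have := ha hi
  have := ha hj
  exact_mod_cast (show 1 ≤ a i - a j by omega)

lemma le_prod_weylFactor_of_gap (ha : Antitone a) (hgap : a (M + 1) < a M) :
    ((M : ℚ) + 2) / 2 ≤ ∏ i ∈ range M, weylFactor a i (M + 1) := by
  rw [← prod_range_add_two_sub_div_add_one_sub]
  refine prod_le_prod (fun i hi => ?_) fun i hi => ?_
  · have : (i : ℚ) < M := by exact_mod_cast mem_range.1 hi
    exact div_nonneg (by linarith) (by linarith)
  · have hi := mem_range.1 hi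
    have h := le_weylFactor (by omega) (one_le_sub_of_gap ha hgap hi.le le_rfl)
    push_cast at h
    exact (le_of_eq (by ring)).trans h

lemma le_prod_weylRow_of_gap (ha : Antitone a) (hgap : a (M + 1) < a M) (n : ℕ) :
    ((n : ℚ) + 2) / 2 ≤ ∏ t ∈ range n, weylRow a (M + 1 + (t + 1)) := by
  rw [← prod_range_add_three_div_add_two]
  refine prod_le_prod (fun t _ => by positivity) fun t _ => ?_
  have h := le_weylFactor (by omega)
    (one_le_sub_of_gap ha hgap (j := M + 1 + (t + 1)) le_rfl (by omega))
  push_cast at h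
  exact (le_of_eq (by ring)).trans (h.trans (weylFactor_le_weylRow ha (by omega)))

theorem weylDimSeq_mul_le_of_gap (ha : Antitone a) (hgap : a (M + 1) < a M) (n : ℕ) :
    weylDimSeq (M + 1) a * ((a M - a (M + 1) + 1) * ((M + 2) * (n + 2)) / 4) ≤
      weylDimSeq (M + 1 + (n + 1)) a := by
  have hcorner : weylFactor a M (M + 1) = a M - a (M + 1) + 1 := by
    rw [weylFactor]
    push_cast
    ring_nf
  have hsplit : weylDimSeq (M + 1 + (n + 1)) a = weylDimSeq (M + 1) a *
      ((∏ i ∈ range M, weylFactor a i (M + 1)) * weylFactor a M (M + 1) *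
        ∏ t ∈ range n, weylRow a (M + 1 + (t + 1))) := by
    rw [weylDimSeq, prod_range_add, prod_range_succ' (fun t => weylRow a (M + 1 + t)), add_zero,
      weylRow, prod_range_succ (fun i => weylFactor a i (M + 1)), weylDimSeq]
    ring
  have hrow := le_prod_weylFactor_of_gap ha hgap
  have hcol := le_prod_weylRow_of_gap ha hgap n
  have hg := one_le_sub_of_gap ha hgap le_rfl le_rfl
  have hW := one_le_weylDimSeq ha (M + 1)
  rw [hsplit, hcorner]
  calc weylDimSeq (M + 1) a * ((a M - a (M + 1) + 1) * ((M + 2) * (n + 2)) / 4)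
      = weylDimSeq (M + 1) a * (((M + 2) / 2 * (a M - a (M + 1) + 1)) * ((n + 2) / 2)) := by
        ring
    _ ≤ _ := by
        gcongr
        exact mul_nonneg ((by positivity : (0 : ℚ) ≤ (M + 2) / 2).trans hrow) (by linarith)

end gap

def extendByZero {N : ℕ} (l : Fin N → ℤ) (i : ℕ) : ℤ := if h : i < N then l ⟨i, h⟩ else 0

@[simp] lemma extendByZero_coe {N : ℕ} (l : Fin N → ℤ) (i : Fin N) : extendByZero l i = l i := by
  simp [extendByZero]

lemma extendByZero_of_le {N : ℕ} (l : Fin N → ℤ) {i : ℕ} (hi : N ≤ i) : extendByZero l i = 0 :=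
  dif_neg (by omega)

lemma weylDim_eq_weylDimSeq (N : ℕ) (l : Fin N → ℤ) :
    weylDim N l = weylDimSeq N (extendByZero l) := by
  rw [weylDim, prod_filter, Fintype.prod_prod_type, prod_comm, weylDimSeq,
    ← Fin.prod_univ_eq_prod_range]
  refine prod_congr rfl fun j _ => ?_
  have hj : (range N).filter (· < (j : ℕ)) = range j := by
    ext i
    simp only [mem_filter, mem_range]
    omega
  rw [weylRow, ← hj, prod_filter, ← Fin.prod_univ_eq_prod_range
    fun i => if i < (j : ℕ) then weylFactor (extendByZero l) i j else 1]
  simp only [weylFactor, extendByZero_coe, Fin.lt_def]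

lemma mem_SUWeight_iff {N : ℕ} {l : Fin N → ℤ} :
    l ∈ SUWeight N ↔ Antitone (extendByZero l) ∧ extendByZero l (N - 1) = 0 := by
  constructor
  · rintro ⟨hmono, hnn, hlast⟩
    refine ⟨fun i j hij => ?_, ?_⟩
    · unfold extendByZero
      split_ifs with hi hj hj
      · exact hmono _ _ (Fin.mk_le_mk.2 hij)
      · omega
      · exact hnn _
      · rfl
    · rcases Nat.eq_zero_or_pos N with rfl | hN
      · rfl
      · simpa [extendByZero, hN] using hlast (by omega)
  · rintro ⟨hanti, hlast⟩
    refine ⟨fun i j hij => by simpa using hanti (Fin.le_def.1 hij), fun i => ?_, fun h => ?_⟩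
    · simpa [hlast] using hanti (show (i : ℕ) ≤ N - 1 by omega)
    · simpa [extendByZero, h] using hlast

namespace SUWeight

variable {N : ℕ} {l : Fin N → ℤ}

lemma antitone_extendByZero (hl : l ∈ SUWeight N) : Antitone (extendByZero l) :=
  (mem_SUWeight_iff.1 hl).1

lemma extendByZero_nonneg (hl : l ∈ SUWeight N) (i : ℕ) : 0 ≤ extendByZero l i := by
  unfold extendByZero
  split_ifs
  exacts [hl.2.1 _, le_rfl]

lemma extendByZero_eq_zero (hl : l ∈ SUWeight N) {i : ℕ} (hi : N - 1 ≤ i) :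
    extendByZero l i = 0 :=
  le_antisymm ((antitone_extendByZero hl hi).trans_eq (mem_SUWeight_iff.1 hl).2)
    (extendByZero_nonneg hl i)

lemma exists_last_pos (hl : l ∈ SUWeight N) (hl0 : l ≠ 0) :
    ∃ M, M + 1 < N ∧ 0 < extendByZero l M ∧ ∀ i, M < i → extendByZero l i = 0 := by
  classical
  have hex : ∃ i, extendByZero l i = 0 := ⟨N, extendByZero_of_le l le_rfl⟩
  have hzero : ∀ i, Nat.find hex ≤ i → extendByZero l i = 0 := fun i hi =>
    le_antisymm ((antitone_extendByZero hl hi).trans_eq (Nat.find_spec hex))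
      (extendByZero_nonneg hl i)
  have hN : N ≠ 0 := by
    rintro rfl
    exact hl0 (Subsingleton.elim _ _)
  obtain ⟨M, hM⟩ : ∃ M, Nat.find hex = M + 1 := Nat.exists_eq_succ_of_ne_zero fun h =>
    hl0 (funext fun i => by simpa using hzero i (by omega))
  refine ⟨M, ?_, (extendByZero_nonneg hl M).lt_of_ne (Ne.symm (Nat.find_min hex (by omega))),
    fun i hi => hzero i (by omega)⟩
  have := Nat.find_min' hex (extendByZero_eq_zero hl le_rfl)
  omega

end SUWeight

lemma zero_mem_SUWeight (N : ℕ) : (0 : Fin N → ℤ) ∈ SUWeight N :=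
  ⟨fun _ _ _ => le_rfl, fun _ => le_rfl, fun _ => rfl⟩

lemma one_le_weylDim {N : ℕ} {l : Fin N → ℤ} (hl : l ∈ SUWeight N) : 1 ≤ weylDim N l := by
  rw [weylDim_eq_weylDimSeq]
  exact one_le_weylDimSeq (SUWeight.antitone_extendByZero hl) N

/-- `μ + c ϖ_L` as a weight of `SU(N)`, where `ϖ_L = (1, …, 1, 0, …, 0)` has `L` ones. -/
def addFundWeight {L : ℕ} (N : ℕ) (μ : Fin L → ℤ) (c : ℤ) : Fin N → ℤ :=
  fun i => extendByZero μ i + if (i : ℕ) < L then c else 0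

section addFundWeight

variable {L N : ℕ} {μ : Fin L → ℤ} {c : ℤ}

lemma extendByZero_addFundWeight (hLN : L ≤ N) (i : ℕ) :
    extendByZero (addFundWeight N μ c) i = extendByZero μ i + if i < L then c else 0 := by
  by_cases hi : i < N
  · simp [extendByZero, addFundWeight, hi]
  · rw [extendByZero_of_le _ (not_lt.1 hi), extendByZero_of_le _ (by omega), if_neg (by omega),
      add_zero]

lemma addFundWeight_mem (hLN : L < N) (hμ : μ ∈ SUWeight L) (hc : 0 ≤ c) :
    addFundWeight N μ c ∈ SUWeight N := by
  refine mem_SUWeight_iff.2 ⟨?_, ?_⟩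
  · rw [funext (extendByZero_addFundWeight hLN.le)]
    refine (SUWeight.antitone_extendByZero hμ).add fun i j hij => ?_
    split_ifs <;> omega
  · rw [extendByZero_addFundWeight hLN.le, SUWeight.extendByZero_eq_zero hμ (by omega),
      if_neg (by omega), add_zero]

theorem weylDim_mul_le_weylDim_addFundWeight (hL : 1 ≤ L) (hLN : L < N) (hμ : μ ∈ SUWeight L)
    (hc : 1 ≤ c) :
    weylDim L μ * ((c + 1) * ((L + 1) * ((N - L : ℕ) + 1)) / 4) ≤
      weylDim N (addFundWeight N μ c) := by
  obtain ⟨M, rfl⟩ : ∃ M, L = M + 1 := ⟨L - 1, by omega⟩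
  obtain ⟨n, rfl⟩ : ∃ n, N = M + 1 + (n + 1) := ⟨N - M - 2, by omega⟩
  have ha := SUWeight.antitone_extendByZero (addFundWeight_mem (c := c) hLN hμ (by omega))
  set a := extendByZero (addFundWeight (M + 1 + (n + 1)) μ c)
  have ha_eq : ∀ i, a i = extendByZero μ i + if i < M + 1 then c else 0 :=
    extendByZero_addFundWeight hLN.le
  have hshift : ∀ i < M + 1, a i = extendByZero μ i + c := fun i hi => by
    rw [ha_eq, if_pos hi]
  have hgap : a M - a (M + 1) = c := by
    rw [ha_eq, ha_eq, SUWeight.extendByZero_eq_zero hμ (by omega),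
      SUWeight.extendByZero_eq_zero hμ (by omega), if_pos (by omega), if_neg (by omega)]
    ring
  rw [weylDim_eq_weylDimSeq, weylDim_eq_weylDimSeq, ← weylDimSeq_congr hshift,
    show M + 1 + (n + 1) - (M + 1) = n + 1 by omega]
  convert weylDimSeq_mul_le_of_gap ha (M := M) (by omega) n using 3
  rw [← hgap]
  push_cast
  ring

end addFundWeight

theorem SUWeight.exists_addFundWeight_eq {N : ℕ} {l : Fin N → ℤ} (hl : l ∈ SUWeight N)
    (hl0 : l ≠ 0) :
    ∃ L, 1 ≤ L ∧ L < N ∧ ∃ μ ∈ SUWeight L, ∃ c : ℤ, 1 ≤ c ∧ addFundWeight N μ c = l := by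
  obtain ⟨M, hMN, hpos, hzero⟩ := exists_last_pos hl hl0
  set a := extendByZero l
  have ha : Antitone a := antitone_extendByZero hl
  set μ : Fin (M + 1) → ℤ := fun i => a i - a M
  have hμ_eq : ∀ i, extendByZero μ i = if i < M + 1 then a i - a M else 0 := fun i => by
    unfold extendByZero
    split_ifs <;> rfl
  refine ⟨M + 1, by omega, hMN, μ, mem_SUWeight_iff.2 ⟨fun i j hij => ?_, ?_⟩, a M, hpos,
    funext fun i => ?_⟩
  · rw [hμ_eq, hμ_eq]
    have := ha hij
    split_ifs with hj hi
    · omega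
    · omega
    · have := ha (show i ≤ M by omega); omega
    · rfl
  · rw [hμ_eq, if_pos (by omega), Nat.add_sub_cancel, sub_self]
  · change extendByZero μ i + (if (i : ℕ) < M + 1 then a M else 0) = l i
    rw [hμ_eq, ← extendByZero_coe l]
    split_ifs with hi
    · ring
    · exact (add_zero _).trans (hzero i (by omega)).symm

lemma ENNReal.tsum_mul_tsum_eq_tsum_sum_range (f g : ℕ → ℝ≥0∞) :
    (∑' n, f n) * ∑' n, g n = ∑' n, ∑ k ∈ range (n + 1), f k * g (n - k) := by
  rw [← ENNReal.tsum_mul_right]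
  simp_rw [← ENNReal.tsum_mul_left, ← Nat.sum_antidiagonal_eq_sum_range_succ fun k l ↦ f k * g l,
    ← Finset.tsum_subtype]
  rw [← ENNReal.tsum_prod, ← ENNReal.tsum_sigma'
    (f := fun x : (Σ n : ℕ, antidiagonal n) => f (x.2 : ℕ × ℕ).1 * g (x.2 : ℕ × ℕ).2)]
  exact (HasAntidiagonal.sigmaAntidiagonalEquivProd.tsum_eq fun p : ℕ × ℕ => f p.1 * g p.2).symm

lemma le_prod_one_add_of_le_one_add_sum {z : ℕ → ℝ≥0∞} {a : ℕ → ℕ → ℝ≥0∞}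
    (h : ∀ n, z n ≤ 1 + ∑ m ∈ range n, a n m * z m) (n : ℕ) :
    z n ≤ ∏ m ∈ range (n + 1), (1 + ∑ k ∈ range m, a m k) := by
  suffices ∀ n, ∀ m < n, z m ≤ ∏ m ∈ range n, (1 + ∑ k ∈ range m, a m k) from
    this _ n n.lt_succ_self
  intro n
  induction n with
  | zero => simp
  | succ n ih =>
    intro m hm
    set B := ∏ m ∈ range n, (1 + ∑ k ∈ range m, a m k)
    rw [prod_range_succ]
    rcases Nat.lt_succ_iff_lt_or_eq.1 hm with hm | rfl
    · exact (ih m hm).trans (le_mul_of_one_le_right' le_self_add)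
    · have hB : 1 ≤ B := one_le_prod' fun _ _ => le_self_add
      calc z m ≤ 1 + ∑ k ∈ range m, a m k * z k := h m
        _ ≤ 1 + ∑ k ∈ range m, a m k * B := by
          gcongr with k hk
          exact ih k (mem_range.1 hk)
        _ ≤ B + (∑ k ∈ range m, a m k) * B := by rw [sum_mul]; gcongr
        _ = B * (1 + ∑ k ∈ range m, a m k) := by ring

lemma prod_one_add_le_ofReal_exp_tsum {ι : Type*} {c : ι → ℝ≥0∞} (hc : ∑' i, c i ≠ ⊤)
    (s : Finset ι) : ∏ i ∈ s, (1 + c i) ≤ ENNReal.ofReal (Real.exp (∑' i, c i).toReal) := by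
  have hne : ∀ i, c i ≠ ⊤ := fun i => ne_top_of_le_ne_top hc (ENNReal.le_tsum i)
  calc ∏ i ∈ s, (1 + c i) = ENNReal.ofReal (∏ i ∈ s, (1 + (c i).toReal)) := by
        rw [ENNReal.ofReal_prod_of_nonneg fun i _ => by positivity]
        refine prod_congr rfl fun i _ => ?_
        rw [ENNReal.ofReal_add zero_le_one ENNReal.toReal_nonneg, ENNReal.ofReal_one,
          ENNReal.ofReal_toReal (hne i)]
    _ ≤ ENNReal.ofReal (Real.exp (∑ i ∈ s, (c i).toReal)) :=
        ENNReal.ofReal_le_ofReal (Real.prod_one_add_le_exp_sum s fun i => ENNReal.toReal_nonneg)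
    _ ≤ ENNReal.ofReal (Real.exp (∑' i, c i).toReal) := by
        rw [← ENNReal.toReal_sum fun i _ => hne i]
        gcongr
        exact ENNReal.sum_le_tsum s

lemma ofReal_mul_rpow_neg {x y : ℝ} (hx : 0 ≤ x) (hy : 0 ≤ y) (s : ℝ) :
    ENNReal.ofReal ((x * y) ^ (-s)) = ENNReal.ofReal (x ^ (-s)) * ENNReal.ofReal (y ^ (-s)) := by
  rw [Real.mul_rpow hx hy, ENNReal.ofReal_mul (by positivity)]

noncomputable def zetaTerm (s : ℝ) (n : ℕ) : ℝ≥0∞ := ENNReal.ofReal (((n : ℝ) + 1) ^ (-s))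

lemma tsum_zetaTerm_lt_top {s : ℝ} (hs : 1 < s) : ∑' n, zetaTerm s n < ⊤ := by
  have h := (Real.summable_one_div_nat_add_rpow 1 s).2 hs
  unfold zetaTerm
  rw [← ENNReal.ofReal_tsum_of_nonneg (fun n => by positivity)]
  · exact ENNReal.ofReal_lt_top
  · refine h.congr fun n => ?_
    rw [abs_of_pos (by positivity), Real.rpow_neg (by positivity), one_div]

lemma tsum_sum_range_zetaTerm_mul_lt_top {s : ℝ} (hs : 1 < s) :
    ∑' n, ∑ m ∈ range n, zetaTerm s m * zetaTerm s (n - m) < ⊤ := by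
  calc ∑' n, ∑ m ∈ range n, zetaTerm s m * zetaTerm s (n - m)
      ≤ ∑' n, ∑ m ∈ range (n + 1), zetaTerm s m * zetaTerm s (n - m) :=
        ENNReal.tsum_le_tsum fun n => sum_le_sum_of_subset (range_subset_range.2 n.le_succ)
    _ = (∑' n, zetaTerm s n) * ∑' n, zetaTerm s n :=
        (ENNReal.tsum_mul_tsum_eq_tsum_sum_range _ _).symm
    _ < ⊤ := ENNReal.mul_lt_top (tsum_zetaTerm_lt_top hs) (tsum_zetaTerm_lt_top hs)

lemma ofReal_weylDim_addFundWeight_rpow_neg_le {s : ℝ} (hs : 0 ≤ s) {L N : ℕ} (hL : 1 ≤ L)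
    (hLN : L < N) {μ : Fin L → ℤ} (hμ : μ ∈ SUWeight L) (k : ℕ) :
    ENNReal.ofReal ((weylDim N (addFundWeight N μ (k + 1)) : ℝ) ^ (-s)) ≤
      ENNReal.ofReal (4 ^ s) * (zetaTerm s L * zetaTerm s (N - L)) * zetaTerm s (k + 1) *
        ENNReal.ofReal ((weylDim L μ : ℝ) ^ (-s)) := by
  have hd : (1 : ℝ) ≤ weylDim L μ := by exact_mod_cast one_le_weylDim hμ
  have h : (weylDim L μ : ℝ) *
      ((((k + 1 : ℕ) : ℝ) + 1) * (((L : ℝ) + 1) * (((N - L : ℕ) : ℝ) + 1)) * 4⁻¹) ≤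
        weylDim N (addFundWeight N μ (k + 1)) := by
    have h := (Rat.cast_le (K := ℝ)).2
      (weylDim_mul_le_weylDim_addFundWeight hL hLN hμ (c := k + 1) (by omega))
    push_cast at h ⊢
    linarith
  refine (ENNReal.ofReal_le_ofReal
    (Real.rpow_le_rpow_of_nonpos (by positivity) h (by linarith))).trans_eq ?_
  have hd0 : (0 : ℝ) ≤ weylDim L μ := by linarith
  simp (disch := first | positivity | exact hd0) only [ofReal_mul_rpow_neg]
  rw [Real.inv_rpow zero_le_four, Real.rpow_neg zero_le_four, inv_inv]
  simp only [zetaTerm]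
  push_cast
  ring

theorem suZeta_le_one_add_tsum {s : ℝ} (hs : 0 ≤ s) (N : ℕ) :
    suZeta N s ≤ 1 + ∑' x : (Σ L : Ico 1 N, ℕ × SUWeight L),
      ENNReal.ofReal ((weylDim N (addFundWeight N x.2.2.1 (x.2.1 + 1)) : ℝ) ^ (-s)) := by
  set f : SUWeight N → ℝ≥0∞ := fun l => ENNReal.ofReal ((weylDim N l : ℝ) ^ (-s))
  set zero : SUWeight N := ⟨0, zero_mem_SUWeight N⟩
  let φ : (Σ L : Ico 1 N, ℕ × SUWeight L) → SUWeight N := fun x =>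
    ⟨addFundWeight N x.2.2.1 (x.2.1 + 1),
      addFundWeight_mem (mem_Ico.1 x.1.2).2 x.2.2.2 (by positivity)⟩
  have hcover : ({zero}ᶜ : Set (SUWeight N)) ⊆ Set.range φ := by
    rintro ⟨l, hl⟩ hne
    obtain ⟨L, hL1, hLN, μ, hμ, c, hc, rfl⟩ :=
      SUWeight.exists_addFundWeight_eq hl fun h => hne (Subtype.ext h)
    refine ⟨⟨⟨L, mem_Ico.2 ⟨hL1, hLN⟩⟩, (c - 1).toNat, ⟨μ, hμ⟩⟩, Subtype.ext ?_⟩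
    simp only [φ]
    congr
    omega
  have hzero : f zero ≤ 1 := by
    refine ENNReal.ofReal_le_one.2 (Real.rpow_le_one_of_one_le_of_nonpos ?_ (by linarith))
    exact_mod_cast one_le_weylDim zero.2
  calc suZeta N s = f zero + ∑' l : ({zero}ᶜ : Set (SUWeight N)), f l := by
        rw [← tsum_singleton zero f, ENNReal.summable.tsum_add_tsum_compl ENNReal.summable]
        rfl
    _ ≤ 1 + ∑' x, f (φ x) := by
        gcongr
        exact (ENNReal.tsum_mono_subtype f hcover).trans
          (ENNReal.tsum_le_tsum_comp_of_surjective Set.rangeFactorization_surjective _)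

theorem suZeta_le_one_add_sum {s : ℝ} (hs : 0 ≤ s) (N : ℕ) :
    suZeta N s ≤ 1 + ∑ L ∈ range N,
      ENNReal.ofReal (4 ^ s) * (∑' n, zetaTerm s n) * (zetaTerm s L * zetaTerm s (N - L)) *
        suZeta L s := by
  let B : (L : Ico 1 N) → ℕ → SUWeight L → ℝ≥0∞ := fun L k μ =>
    ENNReal.ofReal (4 ^ s) * (zetaTerm s L * zetaTerm s (N - L)) * zetaTerm s (k + 1) *
      ENNReal.ofReal ((weylDim L μ : ℝ) ^ (-s))
  calc suZeta N s ≤ 1 + ∑' x : (Σ L : Ico 1 N, ℕ × SUWeight L), B x.1 x.2.1 x.2.2 := by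
        refine (suZeta_le_one_add_tsum hs N).trans ?_
        gcongr with x
        exact ofReal_weylDim_addFundWeight_rpow_neg_le hs (mem_Ico.1 x.1.2).1 (mem_Ico.1 x.1.2).2
          x.2.2.2 x.2.1
    _ = 1 + ∑ L ∈ Ico 1 N, ENNReal.ofReal (4 ^ s) * (zetaTerm s L * zetaTerm s (N - L)) *
          (∑' k, zetaTerm s (k + 1)) * suZeta L s := by
        rw [ENNReal.tsum_sigma (fun (L : Ico 1 N) (p : ℕ × SUWeight L) => B L p.1 p.2),
          ← Finset.tsum_subtype]
        congr 1
        refine tsum_congr fun L => ?_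
        rw [ENNReal.tsum_prod, suZeta]
        simp only [B, ENNReal.tsum_mul_left]
        rw [ENNReal.tsum_mul_right, ENNReal.tsum_mul_left]
    _ ≤ _ := by
        gcongr 1 + ?_
        refine (sum_le_sum fun L _ => ?_).trans
          (sum_le_sum_of_subset fun L hL => mem_range.2 (mem_Ico.1 hL).2)
        rw [mul_right_comm _ (zetaTerm s L * _)]
        gcongr (_ * ?_) * _ * _
        exact ENNReal.tsum_comp_le_tsum_of_injective (add_left_injective 1) _

/-- For every real `s > 1`, the supremum over all integers `N ≥ 2` of `ζ_{SU(N)}(s)`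
is finite. -/
theorem suZeta_iSup_lt_top (s : ℝ) (hs : 1 < s) :
    (⨆ N : {n : ℕ // 2 ≤ n}, suZeta N s) < ⊤ := by
  set C := ENNReal.ofReal (4 ^ s) * ∑' n, zetaTerm s n
  set c : ℕ → ℝ≥0∞ := fun m => ∑ L ∈ range m, C * (zetaTerm s L * zetaTerm s (m - L))
  have hc : ∑' m, c m ≠ ⊤ := by
    simp_rw [c, ← mul_sum, ENNReal.tsum_mul_left]
    exact ENNReal.mul_ne_top (ENNReal.mul_ne_top ENNReal.ofReal_ne_top
      (tsum_zetaTerm_lt_top hs).ne) (tsum_sum_range_zetaTerm_mul_lt_top hs).ne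
  have hbound : ∀ N, suZeta N s ≤ ENNReal.ofReal (Real.exp (∑' m, c m).toReal) := fun N =>
    (le_prod_one_add_of_le_one_add_sum (suZeta_le_one_add_sum (by linarith)) N).trans
      (prod_one_add_le_ofReal_exp_tsum hc _)
  exact (iSup_le fun N : {n : ℕ // 2 ≤ n} => hbound N).trans_lt ENNReal.ofReal_lt_top
end

section
/- Fix an integer g ≥ 2, a real t > 0, and set q = e^{−t/2}. For every integer N ≥ 2, define Z_N = Σ_λ q^{c₂(λ)} d_λ^{2−2g}, the sum over all nonincreasing tuples λ ∈ ℤ^N, where d_λ = ∏_{1≤i<j≤N} (λ_i − λ_j + j − i)/(j − i) and c₂(λ) = (1/N)(Σ_i λ_i² + Σ_{i<j} (λ_i − λ_j)). Then 0 ≤ Z_N − θ(q) ≤ θ(q) · Σ_{μ ≠ 0} d_μ^{2−2g}, where θ(q) = Σ_{n∈ℤ} q^{n²} and the last sum is over all nonzero nonincreasing tuples μ ∈ ℤ^N of nonnegative integers with μ_N = 0. -/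
/-- The Casimir number of a nonincreasing tuple `λ ∈ ℤ^N`:
`c₂(λ) = (1/N)(Σ_i λ_i² + Σ_{i<j} (λ_i − λ_j))`. -/
def casimir (N : ℕ) (l : Fin N → ℤ) : ℚ :=
  ((∑ i : Fin N, ((l i : ℚ)) ^ 2) +
    ∑ p ∈ Finset.univ.filter (fun p : Fin N × Fin N => p.1 < p.2),
      ((l p.1 : ℚ) - (l p.2 : ℚ))) / (N : ℚ)

/-- The Jacobi theta function `θ(q) = Σ_{n ∈ ℤ} q^{n²}`, with values in `[0,∞]`. -/
noncomputable def thetaE (q : ℝ) : ENNReal :=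
  ∑' n : ℤ, ENNReal.ofReal (q ^ (n.natAbs ^ 2))

/-- Migdal's formula: the `U(N)` Yang–Mills partition function on a genus-`g` surface of area
`t`, `Z_{U(N)}(g,t) = Σ_λ q^{c₂(λ)} d_λ^{2−2g}` with `q = e^{−t/2}`, summing over all
nonincreasing tuples `λ ∈ ℤ^N`, with values in `[0,∞]`. -/
noncomputable def ZUN (N : ℕ) (g : ℕ) (t : ℝ) : ENNReal :=
  ∑' l : {l : Fin N → ℤ // ∀ i j : Fin N, i ≤ j → l j ≤ l i},
    ENNReal.ofReal (Real.exp (-(t / 2)) ^ ((casimir N l.1 : ℝ)) *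
      (weylDim N l.1 : ℝ) ^ (2 - 2 * (g : ℤ)))

open Finset

section Tuples

variable {N : ℕ}

lemma weylDim_const_add (n : ℤ) (μ : Fin N → ℤ) :
    weylDim N (fun i => n + μ i) = weylDim N μ := by
  refine prod_congr rfl fun p _ => ?_
  push_cast
  ring_nf

lemma weylDim_const (n : ℤ) : weylDim N (fun _ => n) = 1 := by
  refine prod_eq_one fun p hp => ?_
  have h : ((p.1 : ℕ) : ℚ) < p.2 := by exact_mod_cast (mem_filter.1 hp).2
  rw [sub_self, zero_add, div_self (by linarith)]

lemma casimir_const_add [NeZero N] (n : ℤ) (μ : Fin N → ℤ) :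
    casimir N (fun i => n + μ i) =
      n ^ 2 + 2 * n * ((∑ i, (μ i : ℚ)) / N) + casimir N μ := by
  have hN : (N : ℚ) ≠ 0 := Nat.cast_ne_zero.2 (NeZero.ne N)
  simp only [casimir, Int.cast_add, add_sq, sum_add_distrib, ← mul_sum, sum_const, card_univ,
    Fintype.card_fin, add_sub_add_left_eq_sub, nsmul_eq_mul]
  field_simp
  ring

lemma casimir_const [NeZero N] (n : ℤ) : casimir N (fun _ => n) = n ^ 2 := by
  simpa [casimir] using casimir_const_add n (0 : Fin N → ℤ)

lemma sum_le_sum_sub_of_antitone {α : Type*} [AddCommGroup α] [PartialOrder α]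
    [IsOrderedAddMonoid α] [NeZero N] {μ : Fin N → α} (hμ : Antitone μ) (htop : μ ⊤ = 0) :
    ∑ i, μ i ≤ ∑ p ∈ univ.filter (fun p : Fin N × Fin N => p.1 < p.2), (μ p.1 - μ p.2) := by
  rw [sum_filter, Fintype.sum_prod_type]
  calc ∑ i, μ i = ∑ i, if i < ⊤ then μ i - μ ⊤ else 0 := by
        refine sum_congr rfl fun i _ => ?_
        split_ifs with h
        · rw [htop, sub_zero]
        · rw [not_lt_top_iff.1 h, htop]
    _ ≤ ∑ i, ∑ j, if i < j then μ i - μ j else 0 := by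
        refine sum_le_sum fun i _ => ?_
        refine single_le_sum (f := fun j => if i < j then μ i - μ j else 0) (fun j _ => ?_)
          (mem_univ ⊤)
        split_ifs with h
        · exact sub_nonneg.2 (hμ h.le)
        · exact le_rfl

lemma add_sq_le_casimir [NeZero N] {μ : Fin N → ℤ} (hμ : Antitone μ) (htop : μ ⊤ = 0) :
    (∑ i, (μ i : ℚ)) / N + ((∑ i, (μ i : ℚ)) / N) ^ 2 ≤ casimir N μ := by
  have hN : (0 : ℚ) < N := Nat.cast_pos.2 (NeZero.pos N)
  have hCS : (∑ i, (μ i : ℚ)) ^ 2 ≤ N * ∑ i, (μ i : ℚ) ^ 2 := by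
    simpa using sq_sum_le_card_mul_sum_sq (s := univ) (f := fun i => (μ i : ℚ))
  have hpairs := sum_le_sum_sub_of_antitone (μ := fun i => (μ i : ℚ))
    (fun i j h => Int.cast_le.2 (hμ h)) (by simp [htop])
  have hA : (∑ i, (μ i : ℚ)) ^ 2 / N ≤ ∑ i, (μ i : ℚ) ^ 2 := by
    rw [div_le_iff₀ hN]
    linarith
  rw [casimir, le_div_iff₀ hN]
  calc _ = ∑ i, (μ i : ℚ) + (∑ i, (μ i : ℚ)) ^ 2 / N := by
        field_simp
    _ ≤ _ := by linarith

end Tuples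

section Theta

-- Convexity and monotonicity of `s ↦ q ^ s`: `(q ^ x - q ^ v) (1 - q ^ (u - x)) ≥ 0`.
lemma Real.rpow_add_rpow_le_of_le {q x y u v : ℝ} (hq0 : 0 < q) (hq1 : q ≤ 1)
    (hxu : x ≤ u) (hxv : x ≤ v) (hsum : x + y ≤ u + v) :
    q ^ u + q ^ v ≤ q ^ x + q ^ y := by
  have hd : q ^ (u - x) ≤ 1 := Real.rpow_le_one hq0.le hq1 (by linarith)
  have hvx : q ^ v ≤ q ^ x := Real.rpow_le_rpow_of_exponent_ge hq0 hq1 hxv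
  have hy : q ^ (v + (u - x)) ≤ q ^ y :=
    Real.rpow_le_rpow_of_exponent_ge hq0 hq1 (by linarith)
  have hu : q ^ u = q ^ x * q ^ (u - x) := by rw [← Real.rpow_add hq0]; ring_nf
  rw [Real.rpow_add hq0] at hy
  rw [hu]
  nlinarith [Real.rpow_nonneg hq0.le (u - x)]

lemma thetaE_eq_tsum_rpow (q : ℝ) :
    thetaE q = ∑' n : ℤ, ENNReal.ofReal (q ^ ((n : ℝ) ^ 2)) := by
  refine tsum_congr fun n => ?_
  rw [← Real.rpow_natCast]
  push_cast [Nat.cast_natAbs, sq_abs]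
  rfl

-- Pair the terms `n = k` and `n = -(k + 1)` on both sides.
lemma tsum_rpow_add_sq_le_thetaE {q b ε : ℝ} (hq0 : 0 < q) (hq1 : q ≤ 1)
    (hb0 : 0 ≤ b) (hb1 : b < 1) (hε : b * (1 - b) ≤ ε) :
    ∑' n : ℤ, ENNReal.ofReal (q ^ (((n : ℝ) + b) ^ 2 + ε)) ≤ thetaE q := by
  rw [thetaE_eq_tsum_rpow, ← tsum_nat_add_neg_add_one ENNReal.summable,
    ← tsum_nat_add_neg_add_one ENNReal.summable]
  refine ENNReal.tsum_le_tsum fun k => ?_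
  have hk : (0 : ℝ) ≤ k := k.cast_nonneg
  have key : q ^ (((k : ℝ) + b) ^ 2 + ε) + q ^ (((k : ℝ) + 1 - b) ^ 2 + ε) ≤
      q ^ ((k : ℝ) ^ 2) + q ^ (((k : ℝ) + 1) ^ 2) :=
    Real.rpow_add_rpow_le_of_le hq0 hq1 (by nlinarith) (by nlinarith) (by nlinarith)
  have hnn (s : ℝ) : 0 ≤ q ^ s := Real.rpow_nonneg hq0.le s
  rw [← ENNReal.ofReal_add (hnn _) (hnn _), ← ENNReal.ofReal_add (hnn _) (hnn _)]
  convert ENNReal.ofReal_le_ofReal key using 4 <;> push_cast <;> ring_nf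

lemma tsum_rpow_quadratic_le_thetaE {q a c : ℝ} (hq0 : 0 < q) (hq1 : q ≤ 1) (ha : 0 ≤ a)
    (hc : a + a ^ 2 ≤ c) :
    ∑' n : ℤ, ENNReal.ofReal (q ^ ((n : ℝ) ^ 2 + 2 * n * a + c)) ≤ thetaE q := by
  have hfract : Int.fract a ≤ a := by
    rw [Int.fract]
    have : (0 : ℝ) ≤ ⌊a⌋ := Int.cast_nonneg_iff.2 (Int.floor_nonneg.2 ha)
    linarith
  rw [← (Equiv.subRight ⌊a⌋).tsum_eq]
  calc _ = ∑' n : ℤ, ENNReal.ofReal (q ^ (((n : ℝ) + Int.fract a) ^ 2 + (c - a ^ 2))) := by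
        refine tsum_congr fun n => ?_
        rw [Equiv.subRight_apply, Int.cast_sub, Int.fract]
        ring_nf
    _ ≤ thetaE q := by
        refine tsum_rpow_add_sq_le_thetaE hq0 hq1 (Int.fract_nonneg a) (Int.fract_lt_one a) ?_
        nlinarith [Int.fract_nonneg a]

end Theta

def normalizedTuples (N : ℕ) [NeZero N] : Set (Fin N → ℤ) := {μ | Antitone μ ∧ μ ⊤ = 0}

section Normalized

variable {N : ℕ} [NeZero N]

lemma normalizedTuples_eq_union :
    normalizedTuples N = {0} ∪ {m : Fin N → ℤ | (∀ i j : Fin N, i ≤ j → m j ≤ m i) ∧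
      (∀ i : Fin N, 0 ≤ m i) ∧ (∀ h : N - 1 < N, m ⟨N - 1, h⟩ = 0) ∧ m ≠ 0} := by
  have htop (h : N - 1 < N) : (⟨N - 1, h⟩ : Fin N) = ⊤ := rfl
  ext μ
  simp only [normalizedTuples, Set.mem_ofPred_eq, Set.singleton_union, Set.mem_insert_iff, htop]
  constructor
  · rintro ⟨hμ, hμtop⟩
    by_cases h0 : μ = 0
    · exact Or.inl h0
    · exact Or.inr ⟨fun i j h => hμ h, fun i => hμtop ▸ hμ le_top, fun _ => hμtop, h0⟩
  · rintro (rfl | ⟨hμ, -, hμtop, -⟩)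
    · exact ⟨antitone_const, rfl⟩
    · exact ⟨fun i j h => hμ i j h, hμtop (Nat.sub_one_lt (NeZero.ne N))⟩

lemma tsum_rpow_casimir_const_add_le_thetaE {q : ℝ} (hq0 : 0 < q) (hq1 : q ≤ 1)
    {μ : Fin N → ℤ} (hμ : μ ∈ normalizedTuples N) :
    ∑' n : ℤ, ENNReal.ofReal (q ^ (casimir N (fun i => n + μ i) : ℝ)) ≤ thetaE q := by
  have ha : 0 ≤ (∑ i, (μ i : ℚ)) / N :=
    div_nonneg (sum_nonneg fun i _ => Int.cast_nonneg (hμ.2 ▸ hμ.1 le_top)) N.cast_nonneg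
  have hc := add_sq_le_casimir hμ.1 hμ.2
  simp_rw [casimir_const_add]
  push_cast
  exact tsum_rpow_quadratic_le_thetaE hq0 hq1 (by exact_mod_cast ha) (by exact_mod_cast hc)

lemma tsum_rpow_casimir_const_eq_thetaE (q : ℝ) :
    ∑' n : ℤ, ENNReal.ofReal (q ^ (casimir N (fun _ => n) : ℝ)) = thetaE q := by
  simp_rw [thetaE_eq_tsum_rpow, casimir_const]
  push_cast
  rfl

def normalizedTuplesProdEquiv :
    normalizedTuples N × ℤ ≃ {l : Fin N → ℤ // ∀ i j : Fin N, i ≤ j → l j ≤ l i} where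
  toFun p := ⟨fun i => p.2 + p.1.1 i, fun _ _ h => (add_le_add_iff_left _).2 (p.1.2.1 h)⟩
  invFun l :=
    (⟨fun i => l.1 i - l.1 ⊤, fun _ _ h => sub_le_sub_right (l.2 _ _ h) _, sub_self _⟩, l.1 ⊤)
  left_inv p := by
    ext <;> simp [p.1.2.2]
  right_inv l := by
    ext
    simp

noncomputable def shiftOrbitSum (N g : ℕ) (t : ℝ) (μ : Fin N → ℤ) : ENNReal :=
  (∑' n : ℤ, ENNReal.ofReal (Real.exp (-(t / 2)) ^ (casimir N (fun i => n + μ i) : ℝ))) *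
    ENNReal.ofReal ((weylDim N μ : ℝ) ^ (2 - 2 * (g : ℤ)))

lemma ZUN_eq_tsum_shiftOrbitSum (g : ℕ) (t : ℝ) :
    ZUN N g t = ∑' μ : normalizedTuples N, shiftOrbitSum N g t μ := by
  rw [ZUN, ← normalizedTuplesProdEquiv.tsum_eq, ENNReal.tsum_prod']
  refine tsum_congr fun μ => ?_
  rw [shiftOrbitSum, ← ENNReal.tsum_mul_right]
  refine tsum_congr fun n => ?_
  rw [← ENNReal.ofReal_mul (by positivity)]
  simp [normalizedTuplesProdEquiv, weylDim_const_add]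

lemma shiftOrbitSum_zero (g : ℕ) (t : ℝ) :
    shiftOrbitSum N g t 0 = thetaE (Real.exp (-(t / 2))) := by
  have hdim : weylDim N 0 = 1 := weylDim_const 0
  simp [shiftOrbitSum, hdim, tsum_rpow_casimir_const_eq_thetaE]

lemma shiftOrbitSum_le (g : ℕ) {t : ℝ} (ht : 0 ≤ t) {μ : Fin N → ℤ}
    (hμ : μ ∈ normalizedTuples N) :
    shiftOrbitSum N g t μ ≤
      thetaE (Real.exp (-(t / 2))) * ENNReal.ofReal ((weylDim N μ : ℝ) ^ (2 - 2 * (g : ℤ))) :=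
  mul_le_mul_left (tsum_rpow_casimir_const_add_le_thetaE (Real.exp_pos _)
    (Real.exp_le_one_iff.2 (by linarith)) hμ) _

end Normalized

theorem ZUN_sub_theta_bound_general (g : ℕ) (t : ℝ) (ht : 0 < t)
    (N : ℕ) (hN : 2 ≤ N) :
    thetaE (Real.exp (-(t / 2))) ≤ ZUN N g t ∧
    ZUN N g t - thetaE (Real.exp (-(t / 2))) ≤
      thetaE (Real.exp (-(t / 2))) *
        ∑' m : {m : Fin N → ℤ // (∀ i j : Fin N, i ≤ j → m j ≤ m i) ∧
            (∀ i : Fin N, 0 ≤ m i) ∧ (∀ h : N - 1 < N, m ⟨N - 1, h⟩ = 0) ∧ m ≠ 0},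
          ENNReal.ofReal ((weylDim N m.1 : ℝ) ^ (2 - 2 * (g : ℤ))) := by
  have : NeZero N := ⟨by omega⟩
  have hZ := ZUN_eq_tsum_shiftOrbitSum (N := N) g t
  rw [normalizedTuples_eq_union, ENNReal.summable.tsum_union_disjoint (by simp) ENNReal.summable,
    tsum_singleton, shiftOrbitSum_zero] at hZ
  refine ⟨hZ ▸ le_self_add, tsub_le_iff_left.2 (hZ ▸ add_le_add_right ?_ _)⟩
  rw [← ENNReal.tsum_mul_left]
  exact ENNReal.tsum_le_tsum fun m =>
    shiftOrbitSum_le g ht.le (normalizedTuples_eq_union.superset (Set.mem_union_right _ m.2))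

/-- For `g ≥ 2`, `t > 0`, `q = e^{−t/2}` and `N ≥ 2`:
`0 ≤ Z_N − θ(q) ≤ θ(q) · Σ_{μ ≠ 0} d_μ^{2−2g}`, where the last sum runs over the nonzero
nonincreasing tuples `μ ∈ ℤ^N` of nonnegative integers with `μ_N = 0`. -/
theorem ZUN_sub_theta_bound (g : ℕ) (hg : 2 ≤ g) (t : ℝ) (ht : 0 < t)
    (N : ℕ) (hN : 2 ≤ N) :
    thetaE (Real.exp (-(t / 2))) ≤ ZUN N g t ∧
    ZUN N g t - thetaE (Real.exp (-(t / 2))) ≤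
      thetaE (Real.exp (-(t / 2))) *
        ∑' m : {m : Fin N → ℤ // (∀ i j : Fin N, i ≤ j → m j ≤ m i) ∧
            (∀ i : Fin N, 0 ≤ m i) ∧ (∀ h : N - 1 < N, m ⟨N - 1, h⟩ = 0) ∧ m ≠ 0},
          ENNReal.ofReal ((weylDim N m.1 : ℝ) ^ (2 - 2 * (g : ℤ))) :=
  ZUN_sub_theta_bound_general g t ht N hN
end

section
/- Let N ≥ 2 be an integer, let α and β be integer partitions with ℓ(α) ≤ ⌊(N+1)/2⌋ − 1 and ℓ(β) ≤ N − ⌊(N+1)/2⌋, and let n ∈ ℤ. Then the Casimir number of λ_N(α,β,n) = (α₁+n, …, α_{ℓ(α)}+n, n, …, n, n−β_{ℓ(β)}, …, n−β₁) ∈ ℤ^N satisfies c₂(λ_N(α,β,n)) = |α| + |β| + n² + (2/N)(K(α) + K(β) + n(|α| − |β|)), where c₂(λ) = (1/N)(Σ_{i=1}^N λ_i² + Σ_{1≤i<j≤N} (λ_i − λ_j)) and K(γ) = Σ_{i=1}^{ℓ(γ)} Σ_{j=1}^{γ_i} (j − i) is the total content of the partition γ. -/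
/-- An integer partition: a nonincreasing sequence of nonnegative integers with finitely many
nonzero terms (indexed from `0`, so `α₁ = part 0`, `α₂ = part 1`, …). -/
structure IntPartition where
  part : ℕ → ℕ
  antitone' : ∀ i j : ℕ, i ≤ j → part j ≤ part i
  finite_support' : ∃ M : ℕ, ∀ i : ℕ, M ≤ i → part i = 0

namespace IntPartition

/-- The length `ℓ(α)` of a partition: the number of nonzero terms. -/
noncomputable def len (α : IntPartition) : ℕ :=
  sInf {M : ℕ | ∀ i : ℕ, M ≤ i → α.part i = 0}

/-- The size `|α| = Σ_i α_i` of a partition. -/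
noncomputable def size (α : IntPartition) : ℕ :=
  ∑ i ∈ Finset.range α.len, α.part i

/-- The total content `K(α) = Σ_{i=1}^{ℓ(α)} Σ_{j=1}^{α_i} (j − i)` of a partition
(in 0-indexed form, `Σ_{i<ℓ(α)} Σ_{j<α_i} (j − i)`). -/
noncomputable def content (α : IntPartition) : ℤ :=
  ∑ i ∈ Finset.range α.len, ∑ j ∈ Finset.range (α.part i), ((j : ℤ) - (i : ℤ))

end IntPartition

/-- The highest weight `λ_N(α,β,n) = (α₁+n, …, α_{ℓ(α)}+n, n, …, n, n−β_{ℓ(β)}, …, n−β₁)`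
of `U(N)` associated to two partitions `α, β` and an integer `n`. -/
noncomputable def lamN (N : ℕ) (α β : IntPartition) (n : ℤ) : Fin N → ℤ :=
  fun i =>
    if (i : ℕ) < α.len then n + α.part (i : ℕ)
    else if (i : ℕ) < N - β.len then n
    else n - β.part (N - 1 - (i : ℕ))

open Finset

/-- Auxiliary: the deviation of `λ_N(α,β,n)` from the constant `n`, as a function of the
natural-number index, valued in `ℚ`. -/
noncomputable def aQ (N : ℕ) (α β : IntPartition) (k : ℕ) : ℚ :=
  if k < α.len then (α.part k : ℚ)
  else if k < N - β.len then 0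
  else -(β.part (N - 1 - k) : ℚ)

lemma sum_pairs (N : ℕ) (f : Fin N → ℚ) :
    ∑ p ∈ Finset.univ.filter (fun p : Fin N × Fin N => p.1 < p.2), (f p.1 - f p.2)
      = ∑ i : Fin N, ((N : ℚ) - 1 - 2 * (i : ℕ)) * f i := by
  rw [Finset.sum_filter, Fintype.sum_prod_type]
  have h1 : ∀ i : Fin N, (∑ j : Fin N, if i < j then f i - f j else 0)
      = (N - 1 - (i:ℕ) : ℚ) * f i - ∑ j ∈ Finset.Ioi i, f j := by
    intro i
    rw [← Finset.sum_filter, filter_lt_eq_Ioi, Finset.sum_sub_distrib, Finset.sum_const,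
      Fin.card_Ioi, nsmul_eq_mul]
    have : ((N - 1 - (i:ℕ) : ℕ) : ℚ) = (N : ℚ) - 1 - (i:ℕ) := by
      have hi : (i:ℕ) < N := i.is_lt
      push_cast [Nat.sub_sub, Nat.cast_sub (by omega : 1 + (i:ℕ) ≤ N)]
      ring
    rw [this]
  simp_rw [h1]
  rw [Finset.sum_sub_distrib]
  have h2 : ∑ i : Fin N, ∑ j ∈ Finset.Ioi i, f j = ∑ j : Fin N, ((j:ℕ) : ℚ) * f j := by
    rw [Finset.sum_comm' (s' := fun j => Finset.Iio j) (t' := Finset.univ)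
      (fun i j => by simp [Finset.mem_Ioi, Finset.mem_Iio])]
    simp [Finset.sum_const, Fin.card_Iio]
  rw [h2, ← Finset.sum_sub_distrib]
  congr 1; ext i; ring

lemma gauss (m : ℕ) : 2 * ∑ j ∈ Finset.range m, (j:ℚ) = (m:ℚ)^2 - m := by
  induction m with
  | zero => simp
  | succ m ih => rw [Finset.sum_range_succ]; push_cast; ring_nf; ring_nf at ih; linarith

lemma perpart (m i : ℕ) : 2 * ∑ j ∈ Finset.range m, ((j:ℚ) - (i:ℕ)) = (m:ℚ)^2 - (2*(i:ℚ)+1)*m := by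
  rw [Finset.sum_sub_distrib, Finset.sum_const, Finset.card_range, mul_sub, gauss]
  ring

lemma coeffsum (N : ℕ) : ∑ k ∈ Finset.range N, ((N:ℚ) - 1 - 2*(k:ℕ)) = 0 := by
  rw [Finset.sum_sub_distrib, Finset.sum_const, Finset.card_range, ← Finset.mul_sum, gauss]
  ring

lemma regionB (N Lb : ℕ) (hLb : Lb ≤ N) (g : ℕ → ℚ) :
    ∑ k ∈ Finset.Ico (N - Lb) N, g k = ∑ j ∈ Finset.range Lb, g (N - 1 - j) := by
  apply Finset.sum_nbij' (i := fun k => N - 1 - k) (j := fun j => N - 1 - j)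
  · intro k hk; simp only [Finset.mem_Ico, Finset.mem_range] at *; omega
  · intro j hj; simp only [Finset.mem_Ico, Finset.mem_range] at *; omega
  · intro k hk; simp only [Finset.mem_Ico] at hk; omega
  · intro j hj; simp only [Finset.mem_range] at hj; omega
  · intro k hk; simp only [Finset.mem_Ico] at hk; congr 1; omega

lemma regsum (N L : ℕ) (p : ℕ → ℕ) :
    ∑ k ∈ Finset.range L, ((p k : ℚ)^2 + ((N:ℚ) - 1 - 2*(k:ℕ)) * (p k : ℚ))
      = 2 * (∑ k ∈ Finset.range L, ∑ j ∈ Finset.range (p k), ((j:ℚ) - (k:ℕ)))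
        + (N:ℚ) * ∑ k ∈ Finset.range L, (p k : ℚ) := by
  rw [Finset.mul_sum, Finset.mul_sum, ← Finset.sum_add_distrib]
  apply Finset.sum_congr rfl
  intro k _
  have := perpart (p k) k
  linarith [this]

lemma mainsum (N : ℕ) (α β : IntPartition) (n : ℚ)
    (hab : α.len + β.len + 1 ≤ N) :
    ∑ k ∈ Finset.range N,
        ((n + aQ N α β k)^2 + ((N:ℚ) - 1 - 2*(k:ℕ)) * (n + aQ N α β k))
      = (N:ℚ) * ((α.size : ℚ) + (β.size : ℚ) + n^2) +
        2 * ((α.content : ℚ) + (β.content : ℚ) + n * ((α.size : ℚ) - (β.size : ℚ))) := by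
  set La := α.len with hLa
  set Lb := β.len with hLb
  -- split the summand
  have e1 : ∀ k ∈ Finset.range N,
      (n + aQ N α β k)^2 + ((N:ℚ) - 1 - 2*(k:ℕ)) * (n + aQ N α β k)
        = (n^2 + ((N:ℚ) - 1 - 2*(k:ℕ)) * n)
          + (2*n*(aQ N α β k) + ((aQ N α β k)^2 + ((N:ℚ) - 1 - 2*(k:ℕ)) * (aQ N α β k))) := by
    intro k _; ring
  rw [Finset.sum_congr rfl e1, Finset.sum_add_distrib]
  have s1 : ∑ k ∈ Finset.range N, (n^2 + ((N:ℚ) - 1 - 2*(k:ℕ)) * n) = (N:ℚ) * n^2 := by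
    rw [Finset.sum_add_distrib, Finset.sum_const, Finset.card_range, ← Finset.sum_mul, coeffsum,
      nsmul_eq_mul]
    ring
  rw [s1]
  -- split range N into three regions
  set T : ℕ → ℚ := fun k =>
    2*n*(aQ N α β k) + ((aQ N α β k)^2 + ((N:ℚ) - 1 - 2*(k:ℕ)) * (aQ N α β k)) with hT
  have split1 : ∑ k ∈ Finset.range N, T k
      = ∑ k ∈ Finset.range (N - Lb), T k + ∑ k ∈ Finset.Ico (N - Lb) N, T k := by
    rw [Finset.range_eq_Ico, ← Finset.sum_Ico_consecutive _ (Nat.zero_le (N - Lb))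
      (by omega : N - Lb ≤ N), ← Finset.range_eq_Ico]
  have split2 : ∑ k ∈ Finset.range (N - Lb), T k
      = ∑ k ∈ Finset.range La, T k + ∑ k ∈ Finset.Ico La (N - Lb), T k := by
    rw [Finset.range_eq_Ico, ← Finset.sum_Ico_consecutive _ (Nat.zero_le La)
      (by omega : La ≤ N - Lb), ← Finset.range_eq_Ico]
  have mid0 : ∑ k ∈ Finset.Ico La (N - Lb), T k = 0 := by
    apply Finset.sum_eq_zero
    intro k hk
    rw [Finset.mem_Ico] at hk
    have hA : aQ N α β k = 0 := by
      rw [aQ, if_neg (by omega), if_pos (by omega)]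
    simp only [hT, hA]; ring
  have sA : ∑ k ∈ Finset.range La, T k
      = 2*n*(α.size : ℚ) + (2 * (α.content : ℚ) + (N:ℚ) * (α.size : ℚ)) := by
    have hsz : (α.size : ℚ) = ∑ k ∈ Finset.range La, (α.part k : ℚ) := by
      rw [IntPartition.size]; push_cast; rfl
    have hct : (α.content : ℚ)
        = ∑ k ∈ Finset.range La, ∑ j ∈ Finset.range (α.part k), ((j:ℚ) - (k:ℕ)) := by
      rw [IntPartition.content]; push_cast; rfl
    have step : ∑ k ∈ Finset.range La, T k
        = ∑ k ∈ Finset.range La, (2*n*(α.part k : ℚ))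
          + ∑ k ∈ Finset.range La, ((α.part k : ℚ)^2 + ((N:ℚ) - 1 - 2*(k:ℕ)) * (α.part k : ℚ)) := by
      rw [← Finset.sum_add_distrib]
      apply Finset.sum_congr rfl
      intro k hk
      rw [Finset.mem_range] at hk
      have hA : aQ N α β k = (α.part k : ℚ) := by rw [aQ, if_pos hk]
      simp only [hT, hA]
    rw [step, regsum, ← Finset.mul_sum, hsz, hct]
  have sB : ∑ k ∈ Finset.Ico (N - Lb) N, T k
      = -(2*n)*(β.size : ℚ) + (2 * (β.content : ℚ) + (N:ℚ) * (β.size : ℚ)) := by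
    have hsz : (β.size : ℚ) = ∑ k ∈ Finset.range Lb, (β.part k : ℚ) := by
      rw [IntPartition.size]; push_cast; rfl
    have hct : (β.content : ℚ)
        = ∑ k ∈ Finset.range Lb, ∑ j ∈ Finset.range (β.part k), ((j:ℚ) - (k:ℕ)) := by
      rw [IntPartition.content]; push_cast; rfl
    have step : ∑ k ∈ Finset.Ico (N - Lb) N, T k
        = ∑ j ∈ Finset.range Lb, (-(2*n)*(β.part j : ℚ))
          + ∑ j ∈ Finset.range Lb, ((β.part j : ℚ)^2 + ((N:ℚ) - 1 - 2*(j:ℕ)) * (β.part j : ℚ)) := by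
      rw [regionB N Lb (by omega), ← Finset.sum_add_distrib]
      apply Finset.sum_congr rfl
      intro j hj
      rw [Finset.mem_range] at hj
      have h1 : ¬(N - 1 - j < La) := by omega
      have h2 : ¬(N - 1 - j < N - Lb) := by omega
      have h3 : N - 1 - (N - 1 - j) = j := by omega
      have hA : aQ N α β (N - 1 - j) = -(β.part j : ℚ) := by
        rw [aQ, if_neg h1, if_neg h2, h3]
      have h4 : ((N - 1 - j : ℕ) : ℚ) = (N:ℚ) - 1 - (j:ℚ) := by
        push_cast [Nat.sub_sub, Nat.cast_sub (show 1 + j ≤ N by omega)]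
        ring
      simp only [hT, hA, h4]
      ring
    rw [step, regsum, ← Finset.mul_sum, hsz, hct]
  rw [split1, split2, mid0, sA, sB]
  ring

/-- For `N ≥ 2`, partitions `α, β` with `ℓ(α) ≤ ⌊(N+1)/2⌋ − 1` and `ℓ(β) ≤ N − ⌊(N+1)/2⌋`,
and `n ∈ ℤ`, the Casimir number of `λ_N(α,β,n)` is
`c₂ = |α| + |β| + n² + (2/N)(K(α) + K(β) + n(|α| − |β|))`. -/
theorem casimir_lamN (N : ℕ) (hN : 2 ≤ N) (α β : IntPartition)
    (hα : α.len ≤ (N + 1) / 2 - 1) (hβ : β.len ≤ N - (N + 1) / 2) (n : ℤ) :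
    casimir N (lamN N α β n) =
      (α.size : ℚ) + (β.size : ℚ) + (n : ℚ) ^ 2 +
        (2 / (N : ℚ)) * ((α.content : ℚ) + (β.content : ℚ) +
          (n : ℚ) * ((α.size : ℚ) - (β.size : ℚ))) := by
  have hab : α.len + β.len + 1 ≤ N := by omega
  have hl : ∀ i : Fin N, ((lamN N α β n i : ℤ) : ℚ) = (n:ℚ) + aQ N α β (i : ℕ) := by
    intro i
    rw [lamN, aQ]
    split_ifs <;> push_cast <;> ring
  rw [casimir, sum_pairs N (fun i => ((lamN N α β n i : ℤ) : ℚ))]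
  have comb : (∑ i : Fin N, ((lamN N α β n i : ℚ)) ^ 2)
      + ∑ i : Fin N, ((N : ℚ) - 1 - 2 * (i : ℕ)) * ((lamN N α β n i : ℤ) : ℚ)
      = ∑ k ∈ Finset.range N,
          (((n:ℚ) + aQ N α β k)^2 + ((N:ℚ) - 1 - 2*(k:ℕ)) * ((n:ℚ) + aQ N α β k)) := by
    rw [← Finset.sum_add_distrib,
      ← Fin.sum_univ_eq_sum_range (fun k =>
        (((n:ℚ) + aQ N α β k)^2 + ((N:ℚ) - 1 - 2*(k:ℕ)) * ((n:ℚ) + aQ N α β k))) N]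
    apply Finset.sum_congr rfl
    intro i _
    rw [hl i]
  rw [comb, mainsum N α β (n:ℚ) hab]
  have hN0 : (N:ℚ) ≠ 0 := by positivity
  field_simp
end
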